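/- arXiv:1101.0517 — 17 statements merged into one kernel-verified Lean document; each statement's English description precedes it below -/
import Mathlib

section
/- Let n ≥ 1, let d : Fin n → Fin n → ℝ be symmetric with d i i = 0 for all i, and let w : Fin n → ℝ. Define p : Fin n → Fin n → ℝ by p i j = (d i j + w i + w j)/2. Then p is a weak partial semimetric on Fin n if and only if d is a semimetric on Fin n and w i ≥ 0 for all i. (In other words, the linear bijection P(d;w) = p carries the cone of weighted semimetrics WMET_n onto the cone of weak partial semimetrics wPMET_n.) -/
def IsSemimetric {n : ℕ} (d : Fin n → Fin n → ℝ) : Prop :=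
  (∀ i j, d i j = d j i) ∧ (∀ i, d i i = 0) ∧ (∀ i j, 0 ≤ d i j) ∧
    (∀ i j k, d i j ≤ d i k + d k j)

def IsWeakPartialSemimetric {n : ℕ} (f : Fin n → Fin n → ℝ) : Prop :=
  (∀ i j, f i j = f j i) ∧ (∀ i, 0 ≤ f i i) ∧
    (∀ i j k, 0 ≤ f i k + f k j - f i j - f k k)

/-! Under `p i j = (d i j + w i + w j) / 2` with `d` vanishing on the diagonal, the diagonal of `p`
is the weight `w`, and the defect `p i k + p k j - p i j - p k k` of the weak partial triangle
inequality is half the defect `d i k + d k j - d i j` of the triangle inequality. Nonnegativity of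
`d` then comes for free, from `0 = d i i ≤ d i j + d j i`. -/

section

variable {α : Type*} {d p : α → α → ℝ} {w : α → ℝ}

theorem nonneg_of_triangle (hsym : ∀ i j, d i j = d j i) (hdiag : ∀ i, d i i = 0)
    (htri : ∀ i j k, d i j ≤ d i k + d k j) (i j : α) : 0 ≤ d i j := by
  have := htri i i j
  rw [hdiag, hsym j i] at this
  linarith

theorem symm_of_eq_half_add_weights (hsym : ∀ i j, d i j = d j i)
    (hp : ∀ i j, p i j = (d i j + w i + w j) / 2) (i j : α) : p i j = p j i := by
  rw [hp, hp, hsym]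
  ring

theorem diag_eq_weight_of_eq_half_add_weights (hdiag : ∀ i, d i i = 0)
    (hp : ∀ i j, p i j = (d i j + w i + w j) / 2) (i : α) : p i i = w i := by
  rw [hp, hdiag]
  ring

theorem defect_eq_half_triangle_defect (hdiag : ∀ i, d i i = 0)
    (hp : ∀ i j, p i j = (d i j + w i + w j) / 2) (i j k : α) :
    p i k + p k j - p i j - p k k = (d i k + d k j - d i j) / 2 := by
  rw [hp, hp, hp, hp, hdiag]
  ring

end

theorem stmt_0_general (n : ℕ) (d : Fin n → Fin n → ℝ) (w : Fin n → ℝ)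
    (hsym : ∀ i j, d i j = d j i) (hdiag : ∀ i, d i i = 0)
    (p : Fin n → Fin n → ℝ) (hp : ∀ i j, p i j = (d i j + w i + w j) / 2) :
    IsWeakPartialSemimetric p ↔ IsSemimetric d ∧ ∀ i, 0 ≤ w i := by
  have htri_iff : (∀ i j k, 0 ≤ p i k + p k j - p i j - p k k) ↔
      ∀ i j k, d i j ≤ d i k + d k j := by
    simp only [defect_eq_half_triangle_defect hdiag hp]
    exact forall₃_congr fun i j k => by constructor <;> intro h <;> linarith
  rw [IsWeakPartialSemimetric, IsSemimetric, htri_iff]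
  simp only [diag_eq_weight_of_eq_half_add_weights hdiag hp]
  constructor
  · rintro ⟨-, hw, htri⟩
    exact ⟨⟨hsym, hdiag, nonneg_of_triangle hsym hdiag htri, htri⟩, hw⟩
  · rintro ⟨⟨-, -, -, htri⟩, hw⟩
    exact ⟨symm_of_eq_half_add_weights hsym hp, hw, htri⟩

/-- `P` carries weighted semimetrics onto weak partial semimetrics. -/
theorem stmt_0 (n : ℕ) (hn : 1 ≤ n) (d : Fin n → Fin n → ℝ) (w : Fin n → ℝ)
    (hsym : ∀ i j, d i j = d j i) (hdiag : ∀ i, d i i = 0)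
    (p : Fin n → Fin n → ℝ) (hp : ∀ i j, p i j = (d i j + w i + w j) / 2) :
    IsWeakPartialSemimetric p ↔ IsSemimetric d ∧ ∀ i, 0 ≤ w i :=
  stmt_0_general n d w hsym hdiag p hp
end

section
/- Let n ≥ 1, let d : Fin n → Fin n → ℝ be symmetric with d i i = 0 for all i, and let w : Fin n → ℝ. Define p i j = (d i j + w i + w j)/2. Then p is a strong partial semimetric on Fin n if and only if d is a semimetric and w i − w j ≤ d i j ≤ w i + w j for all i, j (nonnegativity of w is then automatic). (That is, P maps the cone sWMET_n of strongly weighted semimetrics onto the cone sPMET_n of strong partial semimetrics.) -/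
def IsPartialSemimetric {n : ℕ} (f : Fin n → Fin n → ℝ) : Prop :=
  IsWeakPartialSemimetric f ∧ ∀ i j, f i i ≤ f i j

def IsStrongPartialSemimetric {n : ℕ} (f : Fin n → Fin n → ℝ) : Prop :=
  IsPartialSemimetric f ∧ ∀ i j, f i j ≤ f i i + f j j

/-!
With `p = P(d; w)` and `d i i = 0` one has `p i i = w i`, and each defining inequality of a
strong partial semimetric is half of one condition on `(d; w)`:
`p i j - p i i = (d i j - (w i - w j)) / 2`, `p i i + p j j - p i j = (w i + w j - d i j) / 2` and
`p i k + p k j - p i j - p k k = (d i k + d k j - d i j) / 2`.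
Nonnegativity of `d` comes from adding `w i - w j ≤ d i j` to `w j - w i ≤ d j i`,
and nonnegativity of `w i` from `0 = d i i ≤ 2 w i`.
-/

/-- The map `P` of the paper. -/
noncomputable def partialOfWeighted {ι : Type*} (d : ι → ι → ℝ) (w : ι → ℝ) (i j : ι) : ℝ :=
  (d i j + w i + w j) / 2

section partialOfWeighted

variable {ι : Type*} {d : ι → ι → ℝ} {w : ι → ℝ}

theorem partialOfWeighted_self (hdiag : ∀ i, d i i = 0) (i : ι) :
    partialOfWeighted d w i i = w i := by
  rw [partialOfWeighted, hdiag]; ring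

theorem partialOfWeighted_comm (hsym : ∀ i j, d i j = d j i) (i j : ι) :
    partialOfWeighted d w i j = partialOfWeighted d w j i := by
  rw [partialOfWeighted, partialOfWeighted, hsym]; ring

theorem partialOfWeighted_self_le_iff (hdiag : ∀ i, d i i = 0) (i j : ι) :
    partialOfWeighted d w i i ≤ partialOfWeighted d w i j ↔ w i - w j ≤ d i j := by
  rw [partialOfWeighted_self hdiag, partialOfWeighted]
  constructor <;> intro h <;> linarith

theorem partialOfWeighted_le_self_add_self_iff (hdiag : ∀ i, d i i = 0) (i j : ι) :
    partialOfWeighted d w i j ≤ partialOfWeighted d w i i + partialOfWeighted d w j j ↔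
      d i j ≤ w i + w j := by
  rw [partialOfWeighted_self hdiag, partialOfWeighted_self hdiag, partialOfWeighted]
  constructor <;> intro h <;> linarith

theorem partialOfWeighted_triangle_iff (hdiag : ∀ i, d i i = 0) (i j k : ι) :
    0 ≤ partialOfWeighted d w i k + partialOfWeighted d w k j - partialOfWeighted d w i j -
        partialOfWeighted d w k k ↔
      d i j ≤ d i k + d k j := by
  simp only [partialOfWeighted]
  rw [hdiag]
  constructor <;> intro h <;> linarith

theorem nonneg_of_sub_le (hsym : ∀ i j, d i j = d j i) (hw : ∀ i j, w i - w j ≤ d i j) (i j : ι) : 0 ≤ d i j := by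
  linarith [hw i j, hw j i, hsym j i]

end partialOfWeighted

theorem stmt_2_general (n : ℕ) (d : Fin n → Fin n → ℝ) (w : Fin n → ℝ)
    (hsym : ∀ i j, d i j = d j i) (hdiag : ∀ i, d i i = 0)
    (p : Fin n → Fin n → ℝ) (hp : ∀ i j, p i j = (d i j + w i + w j) / 2) :
    IsStrongPartialSemimetric p ↔
      IsSemimetric d ∧ ∀ i j, w i - w j ≤ d i j ∧ d i j ≤ w i + w j := by
  obtain rfl : p = partialOfWeighted d w := funext₂ hp
  simp only [IsStrongPartialSemimetric, IsPartialSemimetric, IsWeakPartialSemimetric,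
    partialOfWeighted_triangle_iff hdiag, partialOfWeighted_self_le_iff hdiag,
    partialOfWeighted_le_self_add_self_iff hdiag]
  constructor
  · rintro ⟨⟨⟨-, -, htri⟩, hlow⟩, hup⟩
    exact ⟨⟨hsym, hdiag, nonneg_of_sub_le hsym hlow, htri⟩, fun i j => ⟨hlow i j, hup i j⟩⟩
  · rintro ⟨⟨-, -, -, htri⟩, hw⟩
    have hdiag_nonneg (i : Fin n) : 0 ≤ partialOfWeighted d w i i := by
      rw [partialOfWeighted_self hdiag]
      linarith [(hw i i).2, hdiag i]
    exact ⟨⟨⟨partialOfWeighted_comm hsym, hdiag_nonneg, htri⟩, fun i j => (hw i j).1⟩,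
      fun i j => (hw i j).2⟩

/-- `P` maps strongly weighted semimetrics onto strong partial semimetrics. -/
theorem stmt_2 (n : ℕ) (hn : 1 ≤ n) (d : Fin n → Fin n → ℝ) (w : Fin n → ℝ)
    (hsym : ∀ i j, d i j = d j i) (hdiag : ∀ i, d i i = 0)
    (p : Fin n → Fin n → ℝ) (hp : ∀ i j, p i j = (d i j + w i + w j) / 2) :
    IsStrongPartialSemimetric p ↔
      IsSemimetric d ∧ ∀ i j, w i - w j ≤ d i j ∧ d i j ≤ w i + w j :=
  stmt_2_general n d w hsym hdiag p hp
end

section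
/- Let n ≥ 1, let d : Fin n → Fin n → ℝ be symmetric with d i i = 0 for all i, and let w : Fin n → ℝ. Define q : Fin n → Fin n → ℝ by q i j = (d i j − w i + w j)/2 (so q i j + w i = q j i + w j automatically). Then q is a quasi-semimetric on Fin n and w i ≥ 0 for all i, if and only if d is a semimetric, w i ≥ 0 for all i, and d i j ≥ w i − w j for all i, j. (That is, Q maps the cone dWMET_n of down-weighted semimetrics onto the cone WQMET_n of weightable quasi-semimetrics with nonnegative weight.) -/
def IsQuasiSemimetric {n : ℕ} (q : Fin n → Fin n → ℝ) : Prop :=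
  (∀ i j, 0 ≤ q i j) ∧ (∀ i, q i i = 0) ∧ (∀ i j k, q i j ≤ q i k + q k j)

section QuasiOfWeighted

variable {α : Type*}

noncomputable def quasiOfWeighted (d : α → α → ℝ) (w : α → ℝ) (i j : α) : ℝ :=
  (d i j - w i + w j) / 2

variable {d : α → α → ℝ} {w : α → ℝ}

theorem quasiOfWeighted_nonneg_iff (i j : α) :
    0 ≤ quasiOfWeighted d w i j ↔ w i - w j ≤ d i j := by
  unfold quasiOfWeighted
  constructor <;> intro h <;> linarith

theorem quasiOfWeighted_self_eq_zero_iff (i : α) :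
    quasiOfWeighted d w i i = 0 ↔ d i i = 0 := by
  unfold quasiOfWeighted
  constructor <;> intro h <;> linarith

theorem quasiOfWeighted_triangle_iff (i j k : α) :
    quasiOfWeighted d w i j ≤ quasiOfWeighted d w i k + quasiOfWeighted d w k j ↔
      d i j ≤ d i k + d k j := by
  unfold quasiOfWeighted
  constructor <;> intro h <;> linarith

theorem quasiOfWeighted_add_swap (hsym : ∀ i j, d i j = d j i) (i j : α) :
    quasiOfWeighted d w i j + quasiOfWeighted d w j i = d i j := by
  unfold quasiOfWeighted
  rw [hsym j i]
  ring

end QuasiOfWeighted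

theorem stmt_3_general (n : ℕ) (d : Fin n → Fin n → ℝ) (w : Fin n → ℝ)
    (hsym : ∀ i j, d i j = d j i) (hdiag : ∀ i, d i i = 0)
    (q : Fin n → Fin n → ℝ) (hq : ∀ i j, q i j = (d i j - w i + w j) / 2) :
    (IsQuasiSemimetric q ∧ ∀ i, 0 ≤ w i) ↔
      IsSemimetric d ∧ (∀ i, 0 ≤ w i) ∧ ∀ i j, w i - w j ≤ d i j := by
  obtain rfl : q = quasiOfWeighted d w := funext₂ hq
  constructor
  · rintro ⟨⟨hq_nonneg, -, hq_tri⟩, hw⟩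
    have hd_nonneg (i j : Fin n) : 0 ≤ d i j :=
      quasiOfWeighted_add_swap hsym i j ▸ add_nonneg (hq_nonneg i j) (hq_nonneg j i)
    exact ⟨⟨hsym, hdiag, hd_nonneg,
      fun i j k => (quasiOfWeighted_triangle_iff i j k).1 (hq_tri i j k)⟩, hw,
      fun i j => (quasiOfWeighted_nonneg_iff i j).1 (hq_nonneg i j)⟩
  · rintro ⟨⟨-, -, -, hd_tri⟩, hw, hdw⟩
    exact ⟨⟨fun i j => (quasiOfWeighted_nonneg_iff i j).2 (hdw i j),
      fun i => (quasiOfWeighted_self_eq_zero_iff i).2 (hdiag i),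
      fun i j k => (quasiOfWeighted_triangle_iff i j k).2 (hd_tri i j k)⟩, hw⟩

/-- `Q` maps down-weighted semimetrics onto weightable
quasi-semimetrics with nonnegative weight. -/
theorem stmt_3 (n : ℕ) (hn : 1 ≤ n) (d : Fin n → Fin n → ℝ) (w : Fin n → ℝ)
    (hsym : ∀ i j, d i j = d j i) (hdiag : ∀ i, d i i = 0)
    (q : Fin n → Fin n → ℝ) (hq : ∀ i j, q i j = (d i j - w i + w j) / 2) :
    (IsQuasiSemimetric q ∧ ∀ i, 0 ≤ w i) ↔
      IsSemimetric d ∧ (∀ i, 0 ≤ w i) ∧ ∀ i j, w i - w j ≤ d i j :=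
  stmt_3_general n d w hsym hdiag q hq
end

section
/- Let n ≥ 1 and let p be a weak partial semimetric on Fin n. Define d' : Fin n → Fin n → ℝ by d' i j = p i j − (p i i + p j j)/2. Then d' is a semimetric on Fin n: it is symmetric, has zero diagonal, is nonnegative, and satisfies the triangle inequality. (Consequently every weak partial semimetric is the sum of a semimetric and a nonnegative combination of the functions P(e_t), t ∈ Fin n.) -/
/-! Removing half of each diagonal entry turns the weak partial triangle condition
`p i k + p k j - p i j - p k k ≥ 0` into exactly `d' i k + d' k j - d' i j ≥ 0`, since the
diagonal terms of `d'` cancel to `-p k k`. Nonnegativity then follows from the triangle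
inequality through `j`, as for any symmetric function with zero diagonal. -/

section DiagonalCorrection

variable {α : Type*}

noncomputable def diagCorrection (p : α → α → ℝ) (i j : α) : ℝ :=
  p i j - (p i i + p j j) / 2

variable {p : α → α → ℝ}

theorem diagCorrection_comm (hsymm : ∀ i j, p i j = p j i) (i j : α) :
    diagCorrection p i j = diagCorrection p j i := by
  simp only [diagCorrection, hsymm i j]
  ring

theorem diagCorrection_self (i : α) : diagCorrection p i i = 0 := by
  simp only [diagCorrection]
  ring

theorem diagCorrection_triangle_defect (i j k : α) :
    diagCorrection p i k + diagCorrection p k j - diagCorrection p i j =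
      p i k + p k j - p i j - p k k := by
  simp only [diagCorrection]
  ring

theorem diagCorrection_le_add (htri : ∀ i j k, 0 ≤ p i k + p k j - p i j - p k k)
    (i j k : α) : diagCorrection p i j ≤ diagCorrection p i k + diagCorrection p k j := by
  linarith [htri i j k, diagCorrection_triangle_defect (p := p) i j k]

end DiagonalCorrection

theorem nonneg_of_symm_of_triangle {α : Type*} {d : α → α → ℝ}
    (hsymm : ∀ i j, d i j = d j i) (hdiag : ∀ i, d i i = 0)
    (htri : ∀ i j k, d i j ≤ d i k + d k j) (i j : α) : 0 ≤ d i j := by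
  have h := htri i i j
  rw [hdiag i, hsymm j i] at h
  linarith

theorem stmt_4_general (n : ℕ) (p : Fin n → Fin n → ℝ)
    (hp : IsWeakPartialSemimetric p)
    (d' : Fin n → Fin n → ℝ) (hd' : ∀ i j, d' i j = p i j - (p i i + p j j) / 2) :
    IsSemimetric d' := by
  obtain ⟨hsymm, -, htri⟩ := hp
  obtain rfl : d' = diagCorrection p := funext₂ hd'
  have hsymm' := diagCorrection_comm hsymm
  have htri' := diagCorrection_le_add htri
  exact ⟨hsymm', diagCorrection_self,
    nonneg_of_symm_of_triangle hsymm' diagCorrection_self htri', htri'⟩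

/-- subtracting the diagonal part of a weak partial semimetric
yields a semimetric. -/
theorem stmt_4 (n : ℕ) (hn : 1 ≤ n) (p : Fin n → Fin n → ℝ)
    (hp : IsWeakPartialSemimetric p)
    (d' : Fin n → Fin n → ℝ) (hd' : ∀ i j, d' i j = p i j - (p i i + p j j) / 2) :
    IsSemimetric d' :=
  stmt_4_general n p hp d' hd'
end

section
/- Let n ≥ 1 and j ∈ Fin n. Let e : Fin n → Fin n → ℝ be defined by e j j = 2, e i j = e j i = 1 for i ≠ j, and e i k = 0 when i ≠ j and k ≠ j. Then e is a weak partial semimetric on Fin n, and it spans an extreme ray of the cone of weak partial semimetrics: whenever p₁ and p₂ are weak partial semimetrics on Fin n with p₁ + p₂ = e, there exists λ ∈ ℝ with 0 ≤ λ ≤ 1 such that p₁ = λ • e (and hence p₂ = (1−λ) • e). -/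
/-- `2 P(0; w)` in the notation `P(d; w) i j = (d i j + w i + w j) / 2`. -/
def weightSemimetric {n : ℕ} (w : Fin n → ℝ) : Fin n → Fin n → ℝ := fun x y => w x + w y

namespace IsWeakPartialSemimetric

variable {n : ℕ} {f p₁ p₂ : Fin n → Fin n → ℝ}

lemma diag_add_diag_le (hf : IsWeakPartialSemimetric f) (x y : Fin n) :
    f x x + f y y ≤ 2 * f x y := by
  have := hf.2.2 x x y
  linarith [hf.1 x y]

lemma nonneg (hf : IsWeakPartialSemimetric f) (x y : Fin n) : 0 ≤ f x y := by
  linarith [hf.diag_add_diag_le x y, hf.2.1 x, hf.2.1 y]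

lemma eq_zero_of_add_eq_zero (h₁ : IsWeakPartialSemimetric p₁) (h₂ : IsWeakPartialSemimetric p₂)
    {x y : Fin n} (h : p₁ x y + p₂ x y = 0) : p₁ x y = 0 :=
  ((add_eq_zero_iff_of_nonneg (h₁.nonneg x y) (h₂.nonneg x y)).1 h).1

lemma exists_eq_smul_of_add_eq_single (h₁ : IsWeakPartialSemimetric p₁)
    (h₂ : IsWeakPartialSemimetric p₂) {j : Fin n}
    (hsum : p₁ + p₂ = weightSemimetric (Pi.single j 1)) :
    ∃ l : ℝ, 0 ≤ l ∧ l ≤ 1 ∧ p₁ = l • weightSemimetric (Pi.single j 1) := by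
  have hsum' (x y : Fin n) : p₁ x y + p₂ x y = weightSemimetric (Pi.single j 1) x y :=
    congrFun (congrFun hsum x) y
  have hjj : p₁ j j + p₂ j j = 2 := by
    rw [hsum', weightSemimetric, Pi.single_eq_same]; norm_num
  have off_zero {x y : Fin n} (hx : x ≠ j) (hy : y ≠ j) : p₁ x y = 0 ∧ p₂ x y = 0 := by
    have h := hsum' x y
    simp only [weightSemimetric, Pi.single_eq_of_ne hx, Pi.single_eq_of_ne hy, add_zero] at h
    exact ⟨h₁.eq_zero_of_add_eq_zero h₂ h, h₂.eq_zero_of_add_eq_zero h₁ (by linarith)⟩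
  have row {x : Fin n} (hx : x ≠ j) : 2 * p₁ x j = p₁ j j := by
    have hxj := hsum' x j
    simp only [weightSemimetric, Pi.single_eq_of_ne hx, Pi.single_eq_same, zero_add] at hxj
    have h₁x := h₁.diag_add_diag_le x j
    have h₂x := h₂.diag_add_diag_le x j
    linarith [(off_zero hx hx).1, (off_zero hx hx).2]
  refine ⟨p₁ j j / 2, by linarith [h₁.2.1 j], by linarith [h₂.2.1 j], ?_⟩
  funext x y
  simp only [Pi.smul_apply, smul_eq_mul, weightSemimetric]
  obtain rfl | hx := eq_or_ne x j
  · obtain rfl | hy := eq_or_ne y x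
    · norm_num
    · rw [h₁.1, ← row hy, Pi.single_eq_same, Pi.single_eq_of_ne hy]; ring
  · obtain rfl | hy := eq_or_ne y j
    · rw [← row hx, Pi.single_eq_same, Pi.single_eq_of_ne hx]; ring
    · rw [(off_zero hx hy).1, Pi.single_eq_of_ne hx, Pi.single_eq_of_ne hy]; ring

end IsWeakPartialSemimetric

lemma isWeakPartialSemimetric_weightSemimetric {n : ℕ} {w : Fin n → ℝ} (hw : 0 ≤ w) :
    IsWeakPartialSemimetric (weightSemimetric w) := by
  refine ⟨fun x y => add_comm _ _, fun x => add_nonneg (hw x) (hw x), fun x y k => ?_⟩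
  simp only [weightSemimetric]
  linarith

lemma eq_weightSemimetric_single {n : ℕ} {j : Fin n} {e : Fin n → Fin n → ℝ}
    (hejj : e j j = 2) (he1 : ∀ i, i ≠ j → e i j = 1 ∧ e j i = 1)
    (he0 : ∀ i k, i ≠ j → k ≠ j → e i k = 0) :
    e = weightSemimetric (Pi.single j 1) := by
  funext x y
  simp only [weightSemimetric]
  obtain rfl | hx := eq_or_ne x j
  · obtain rfl | hy := eq_or_ne y x
    · rw [hejj, Pi.single_eq_same]; norm_num
    · rw [(he1 y hy).2, Pi.single_eq_same, Pi.single_eq_of_ne hy, add_zero]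
  · obtain rfl | hy := eq_or_ne y j
    · rw [(he1 x hx).1, Pi.single_eq_same, Pi.single_eq_of_ne hx, zero_add]
    · rw [he0 x y hx hy, Pi.single_eq_of_ne hx, Pi.single_eq_of_ne hy, add_zero]

theorem stmt_5_general (n : ℕ) (j : Fin n) (e : Fin n → Fin n → ℝ)
    (hejj : e j j = 2)
    (he1 : ∀ i, i ≠ j → e i j = 1 ∧ e j i = 1)
    (he0 : ∀ i k, i ≠ j → k ≠ j → e i k = 0) :
    IsWeakPartialSemimetric e ∧
      ∀ p₁ p₂ : Fin n → Fin n → ℝ,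
        IsWeakPartialSemimetric p₁ → IsWeakPartialSemimetric p₂ →
        p₁ + p₂ = e →
        ∃ l : ℝ, 0 ≤ l ∧ l ≤ 1 ∧ p₁ = l • e := by
  obtain rfl := eq_weightSemimetric_single hejj he1 he0
  exact ⟨isWeakPartialSemimetric_weightSemimetric (Pi.single_nonneg.2 zero_le_one),
    fun _ _ h₁ h₂ hsum => h₁.exists_eq_smul_of_add_eq_single h₂ hsum⟩

/-- `2 P(e_j)` is a weak partial semimetric spanning an extreme ray of
the cone of weak partial semimetrics. -/
theorem stmt_5 (n : ℕ) (hn : 1 ≤ n) (j : Fin n) (e : Fin n → Fin n → ℝ)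
    (hejj : e j j = 2)
    (he1 : ∀ i, i ≠ j → e i j = 1 ∧ e j i = 1)
    (he0 : ∀ i k, i ≠ j → k ≠ j → e i k = 0) :
    IsWeakPartialSemimetric e ∧
      ∀ p₁ p₂ : Fin n → Fin n → ℝ,
        IsWeakPartialSemimetric p₁ → IsWeakPartialSemimetric p₂ →
        p₁ + p₂ = e →
        ∃ l : ℝ, 0 ≤ l ∧ l ≤ 1 ∧ p₁ = l • e :=
  stmt_5_general n j e hejj he1 he0
end

section
/- Let n ≥ 1 and let p be a partial semimetric on Fin n. Define its lifting p⁺ : Fin (n+1) → Fin (n+1) → ℝ by p⁺ 0 0 = 0, p⁺ 0 (i+1) = p⁺ (i+1) 0 = p i i for i ∈ Fin n, and p⁺ (i+1) (j+1) = p i j for i, j ∈ Fin n. Then p⁺ is a partial semimetric on Fin (n+1) if and only if p i j ≤ p i i + p j j holds for all i, j, i.e., if and only if p is a strong partial semimetric. (Thus sPMET_n = { p ∈ PMET_n : p⁺ ∈ PMET_{n+1} }.) -/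
/-- The lifting `p⁺`, with `0` as the new point. -/
def liftPlus {n : ℕ} (p : Fin n → Fin n → ℝ) : Fin (n + 1) → Fin (n + 1) → ℝ :=
  Fin.cases (Fin.cases 0 fun j => p j j) fun i => Fin.cases (p i i) fun j => p i j

section

variable {n : ℕ} (p : Fin n → Fin n → ℝ)

@[simp] lemma liftPlus_zero_zero : liftPlus p 0 0 = 0 := rfl

@[simp] lemma liftPlus_zero_succ (j : Fin n) : liftPlus p 0 j.succ = p j j := rfl

@[simp] lemma liftPlus_succ_zero (i : Fin n) : liftPlus p i.succ 0 = p i i := rfl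

@[simp] lemma liftPlus_succ_succ (i j : Fin n) : liftPlus p i.succ j.succ = p i j := rfl

lemma eq_liftPlus {P : Fin (n + 1) → Fin (n + 1) → ℝ} (h00 : P 0 0 = 0)
    (h0 : ∀ i, P 0 i.succ = p i i ∧ P i.succ 0 = p i i) (hs : ∀ i j, P i.succ j.succ = p i j) :
    P = liftPlus p := by
  ext i j
  cases i using Fin.cases <;> cases j using Fin.cases <;> simp [*]

variable {p}

lemma liftPlus_symm (h : ∀ i j, p i j = p j i) (i j : Fin (n + 1)) :
    liftPlus p i j = liftPlus p j i := by
  cases i using Fin.cases <;> cases j using Fin.cases <;> simp [h]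

lemma liftPlus_diag_nonneg (h : ∀ i, 0 ≤ p i i) (i : Fin (n + 1)) : 0 ≤ liftPlus p i i := by
  cases i using Fin.cases <;> simp [h]

lemma liftPlus_diag_le (hdiag : ∀ i, 0 ≤ p i i) (hmin : ∀ i j, p i i ≤ p i j)
    (i j : Fin (n + 1)) : liftPlus p i i ≤ liftPlus p i j := by
  cases i using Fin.cases <;> cases j using Fin.cases <;> simp [hdiag, hmin]

lemma liftPlus_triangle (hp : IsPartialSemimetric p) (hstrong : ∀ i j, p i j ≤ p i i + p j j)
    (i j k : Fin (n + 1)) :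
    0 ≤ liftPlus p i k + liftPlus p k j - liftPlus p i j - liftPlus p k k := by
  obtain ⟨⟨hsymm, hdiag, htri⟩, hmin⟩ := hp
  revert i j k
  simp only [Fin.forall_fin_succ, liftPlus_zero_zero, liftPlus_zero_succ, liftPlus_succ_zero,
    liftPlus_succ_succ]
  exact ⟨⟨⟨by norm_num, fun c => by linarith [hdiag c]⟩,
      fun b => ⟨by norm_num, fun c => by linarith [hmin b c, hsymm b c]⟩⟩,
    fun a => ⟨⟨by norm_num, fun c => by linarith [hmin a c]⟩,
      fun b => ⟨by linarith [hstrong a b], htri a b⟩⟩⟩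

lemma isPartialSemimetric_liftPlus (hp : IsPartialSemimetric p)
    (hstrong : ∀ i j, p i j ≤ p i i + p j j) : IsPartialSemimetric (liftPlus p) :=
  ⟨⟨liftPlus_symm hp.1.1, liftPlus_diag_nonneg hp.1.2.1, liftPlus_triangle hp hstrong⟩,
    liftPlus_diag_le hp.1.2.1 hp.2⟩

lemma le_add_of_isWeakPartialSemimetric_liftPlus (h : IsWeakPartialSemimetric (liftPlus p))
    (i j : Fin n) : p i j ≤ p i i + p j j := by
  have := h.2.2 i.succ j.succ 0
  simp only [liftPlus_succ_zero, liftPlus_zero_succ, liftPlus_succ_succ, liftPlus_zero_zero] at this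
  linarith

end

theorem stmt_8_general (n : ℕ) (p : Fin n → Fin n → ℝ)
    (hp : IsPartialSemimetric p)
    (P : Fin (n + 1) → Fin (n + 1) → ℝ)
    (hP00 : P 0 0 = 0)
    (hP0 : ∀ i : Fin n, P 0 i.succ = p i i ∧ P i.succ 0 = p i i)
    (hPs : ∀ i j : Fin n, P i.succ j.succ = p i j) :
    IsPartialSemimetric P ↔ ∀ i j, p i j ≤ p i i + p j j := by
  obtain rfl := eq_liftPlus p hP00 hP0 hPs
  exact ⟨fun h => le_add_of_isWeakPartialSemimetric_liftPlus h.1, isPartialSemimetric_liftPlus hp⟩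

/-- the lifting `p⁺` of a partial semimetric `p` is a partial
semimetric iff `p` is a strong partial semimetric. -/
theorem stmt_8 (n : ℕ) (hn : 1 ≤ n) (p : Fin n → Fin n → ℝ)
    (hp : IsPartialSemimetric p)
    (P : Fin (n + 1) → Fin (n + 1) → ℝ)
    (hP00 : P 0 0 = 0)
    (hP0 : ∀ i : Fin n, P 0 i.succ = p i i ∧ P i.succ 0 = p i i)
    (hPs : ∀ i j : Fin n, P i.succ j.succ = p i j) :
    IsPartialSemimetric P ↔ ∀ i j, p i j ≤ p i i + p j j :=
  stmt_8_general n p hp P hP00 hP0 hPs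
end

section
/- Let n ≥ 1, let d : Fin n → Fin n → ℝ be symmetric with d i i = 0 for all i, and let w : Fin n → ℝ. Define D : Fin (n+1) → Fin (n+1) → ℝ by D 0 0 = 0, D 0 (i+1) = D (i+1) 0 = w i for i ∈ Fin n, and D (i+1) (j+1) = d i j for i, j ∈ Fin n. Then D is a semimetric on Fin (n+1) if and only if d is a semimetric on Fin n and w i − w j ≤ d i j ≤ w i + w j holds for all i, j (nonnegativity of w is then automatic). (Thus the cone sWMET_n of strongly weighted semimetrics on n points is identified with the metric cone MET_{n+1}.) -/
namespace IsSemimetric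

variable {m n : ℕ} {d : Fin n → Fin n → ℝ}

theorem comp (hd : IsSemimetric d) (f : Fin m → Fin n) :
    IsSemimetric fun i j => d (f i) (f j) :=
  ⟨fun _ _ => hd.1 _ _, fun _ => hd.2.1 _, fun _ _ => hd.2.2.1 _ _,
    fun _ _ _ => hd.2.2.2 _ _ _⟩

theorem sub_le (hd : IsSemimetric d) (a b c : Fin n) : d c a - d c b ≤ d a b := by
  linarith [hd.2.2.2 c a b, hd.1 b a]

theorem le_add (hd : IsSemimetric d) (a b c : Fin n) : d a b ≤ d c a + d c b := by
  linarith [hd.2.2.2 a b c, hd.1 a c]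

end IsSemimetric

def weightedExtension {n : ℕ} (d : Fin n → Fin n → ℝ) (w : Fin n → ℝ) :
    Fin (n + 1) → Fin (n + 1) → ℝ :=
  Fin.cases (Fin.cases 0 w) fun i => Fin.cases (w i) (d i)

section weightedExtension

variable {n : ℕ} {d : Fin n → Fin n → ℝ} {w : Fin n → ℝ}

@[simp] theorem weightedExtension_zero_zero : weightedExtension d w 0 0 = 0 := rfl

@[simp] theorem weightedExtension_zero_succ (i : Fin n) :
    weightedExtension d w 0 i.succ = w i := rfl

@[simp] theorem weightedExtension_succ_zero (i : Fin n) :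
    weightedExtension d w i.succ 0 = w i := rfl

@[simp] theorem weightedExtension_succ_succ (i j : Fin n) :
    weightedExtension d w i.succ j.succ = d i j := rfl

theorem weightedExtension_eq_of_forall {D : Fin (n + 1) → Fin (n + 1) → ℝ} (h00 : D 0 0 = 0)
    (h0 : ∀ i : Fin n, D 0 i.succ = w i ∧ D i.succ 0 = w i)
    (hs : ∀ i j : Fin n, D i.succ j.succ = d i j) : D = weightedExtension d w := by
  ext i j
  rcases Fin.eq_zero_or_eq_succ i with rfl | ⟨i, rfl⟩ <;>
    rcases Fin.eq_zero_or_eq_succ j with rfl | ⟨j, rfl⟩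
  exacts [h00, (h0 j).1, (h0 i).2, hs i j]

theorem IsSemimetric.of_weightedExtension (hD : IsSemimetric (weightedExtension d w)) :
    IsSemimetric d ∧ ∀ i j, w i - w j ≤ d i j ∧ d i j ≤ w i + w j :=
  ⟨hD.comp Fin.succ, fun i j => ⟨hD.sub_le i.succ j.succ 0, hD.le_add i.succ j.succ 0⟩⟩

theorem IsSemimetric.weightedExtension (hd : IsSemimetric d)
    (hw : ∀ i j, w i - w j ≤ d i j ∧ d i j ≤ w i + w j) :
    IsSemimetric (weightedExtension d w) := by
  obtain ⟨hsymm, hdiag, hnonneg, htri⟩ := hd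
  have hw_nonneg (i : Fin n) : 0 ≤ w i := by linarith [(hw i i).2, hdiag i]
  refine ⟨fun i j => ?_, fun i => ?_, fun i j => ?_, fun i j k => ?_⟩
  · rcases Fin.eq_zero_or_eq_succ i with rfl | ⟨i, rfl⟩ <;>
      rcases Fin.eq_zero_or_eq_succ j with rfl | ⟨j, rfl⟩ <;> simp [hsymm]
  · rcases Fin.eq_zero_or_eq_succ i with rfl | ⟨i, rfl⟩ <;> simp [hdiag]
  · rcases Fin.eq_zero_or_eq_succ i with rfl | ⟨i, rfl⟩ <;>
      rcases Fin.eq_zero_or_eq_succ j with rfl | ⟨j, rfl⟩ <;> simp [hw_nonneg, hnonneg]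
  rcases Fin.eq_zero_or_eq_succ i with rfl | ⟨i, rfl⟩ <;>
    rcases Fin.eq_zero_or_eq_succ j with rfl | ⟨j, rfl⟩ <;>
    rcases Fin.eq_zero_or_eq_succ k with rfl | ⟨k, rfl⟩ <;>
    simp only [weightedExtension_zero_zero, weightedExtension_zero_succ,
      weightedExtension_succ_zero, weightedExtension_succ_succ]
  · simp
  · linarith [hw_nonneg k]
  · simp
  · linarith [(hw j k).1, hsymm j k]
  · simp
  · linarith [(hw i k).1]
  · exact (hw i j).2
  · exact htri i j k

theorem isSemimetric_weightedExtension_iff :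
    IsSemimetric (weightedExtension d w) ↔
      IsSemimetric d ∧ ∀ i j, w i - w j ≤ d i j ∧ d i j ≤ w i + w j :=
  ⟨IsSemimetric.of_weightedExtension, fun h => h.1.weightedExtension h.2⟩

end weightedExtension

theorem stmt_9_general (n : ℕ) (d : Fin n → Fin n → ℝ) (w : Fin n → ℝ)
    (D : Fin (n + 1) → Fin (n + 1) → ℝ)
    (hD00 : D 0 0 = 0)
    (hD0 : ∀ i : Fin n, D 0 i.succ = w i ∧ D i.succ 0 = w i)
    (hDs : ∀ i j : Fin n, D i.succ j.succ = d i j) :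
    IsSemimetric D ↔
      IsSemimetric d ∧ ∀ i j, w i - w j ≤ d i j ∧ d i j ≤ w i + w j := by
  rw [weightedExtension_eq_of_forall hD00 hD0 hDs]
  exact isSemimetric_weightedExtension_iff

/-- the one-point extension of `(d; w)` is a semimetric on `n+1`
points iff `d` is a semimetric and `(d; w)` is strongly weighted;
i.e. `sWMET_n = MET_{n+1}`. -/
theorem stmt_9 (n : ℕ) (hn : 1 ≤ n) (d : Fin n → Fin n → ℝ) (w : Fin n → ℝ)
    (hsym : ∀ i j, d i j = d j i) (hdiag : ∀ i, d i i = 0)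
    (D : Fin (n + 1) → Fin (n + 1) → ℝ)
    (hD00 : D 0 0 = 0)
    (hD0 : ∀ i : Fin n, D 0 i.succ = w i ∧ D i.succ 0 = w i)
    (hDs : ∀ i j : Fin n, D i.succ j.succ = d i j) :
    IsSemimetric D ↔
      IsSemimetric d ∧ ∀ i j, w i - w j ≤ d i j ∧ d i j ≤ w i + w j :=
  stmt_9_general n d w D hD00 hD0 hDs
end

section
/- Let n ≥ 1 and let p : Fin n → Fin n → ℝ be a symmetric function with p i j ∈ {0, 1} for all i, j. Then p is a strong partial semimetric on Fin n if and only if there exists a subset S ⊆ Fin n such that for all i, j: p i j = 1 ↔ (i ∈ S ∨ j ∈ S). (Thus the 0,1-valued strong partial semimetrics are exactly the all-zero function and the 2ⁿ − 1 partial 2-cuts γ(S; S̄) = J(S) + δ(S) for nonempty S.) -/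
/-! A strong partial semimetric satisfies `max (p i i) (p j j) ≤ p i j ≤ p i i + p j j`. For
`0,1`-values this says `p i j = 1` exactly when `p i i = 1` or `p j j = 1`, so `S = {i | p i i = 1}`.
Conversely, a partial cut satisfies every defining inequality by a check of the cases. -/

/-- The partial 2-cut `γ(S; S̄) = J(S) + δ(S)`. -/
noncomputable def partialCut {n : ℕ} (S : Set (Fin n)) : Fin n → Fin n → ℝ :=
  open Classical in fun i j => if i ∈ S ∨ j ∈ S then 1 else 0

theorem isStrongPartialSemimetric_partialCut {n : ℕ} (S : Set (Fin n)) :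
    IsStrongPartialSemimetric (partialCut S) := by
  refine ⟨⟨⟨fun i j => ?_, fun i => ?_, fun i j k => ?_⟩, fun i j => ?_⟩, fun i j => ?_⟩ <;>
    simp only [partialCut] <;> split_ifs <;> norm_num <;> tauto

theorem eq_partialCut_of_zero_one {n : ℕ} {p : Fin n → Fin n → ℝ} {S : Set (Fin n)}
    (h01 : ∀ i j, p i j = 0 ∨ p i j = 1) (hS : ∀ i j, p i j = 1 ↔ (i ∈ S ∨ j ∈ S)) :
    p = partialCut S := by
  ext i j
  rw [partialCut]
  split_ifs with h
  · exact (hS i j).mpr h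
  · exact (h01 i j).resolve_right (mt (hS i j).mp h)

namespace IsStrongPartialSemimetric

variable {n : ℕ} {p : Fin n → Fin n → ℝ}

theorem diag_le_left (hp : IsStrongPartialSemimetric p) (i j : Fin n) : p i i ≤ p i j :=
  hp.1.2 i j

theorem diag_le_right (hp : IsStrongPartialSemimetric p) (i j : Fin n) : p j j ≤ p i j :=
  hp.1.1.1 i j ▸ hp.diag_le_left j i

theorem le_diag_add_diag (hp : IsStrongPartialSemimetric p) (i j : Fin n) :
    p i j ≤ p i i + p j j :=
  hp.2 i j

theorem eq_one_iff_of_zero_one (hp : IsStrongPartialSemimetric p)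
    (h01 : ∀ i j, p i j = 0 ∨ p i j = 1) (i j : Fin n) :
    p i j = 1 ↔ (p i i = 1 ∨ p j j = 1) := by
  constructor
  · intro hij
    by_contra! hdiag
    have hi := (h01 i i).resolve_right hdiag.1
    have hj := (h01 j j).resolve_right hdiag.2
    linarith [hp.le_diag_add_diag i j]
  · intro hdiag
    refine (h01 i j).resolve_left fun hij => ?_
    rcases hdiag with h | h
    · linarith [hp.diag_le_left i j]
    · linarith [hp.diag_le_right i j]

end IsStrongPartialSemimetric

theorem stmt_10_general (n : ℕ) (p : Fin n → Fin n → ℝ)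
    (h01 : ∀ i j, p i j = 0 ∨ p i j = 1) :
    IsStrongPartialSemimetric p ↔
      ∃ S : Set (Fin n), ∀ i j, p i j = 1 ↔ (i ∈ S ∨ j ∈ S) := by
  constructor
  · exact fun hp => ⟨{i | p i i = 1}, hp.eq_one_iff_of_zero_one h01⟩
  · rintro ⟨S, hS⟩
    rw [eq_partialCut_of_zero_one h01 hS]
    exact isStrongPartialSemimetric_partialCut S

/-- the 0,1-valued strong partial semimetrics are exactly the
partial 2-cuts `γ(S; S̄) = J(S) + δ(S)` (with `S = ∅` giving the zero function). -/
theorem stmt_10 (n : ℕ) (hn : 1 ≤ n) (p : Fin n → Fin n → ℝ)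
    (hsym : ∀ i j, p i j = p j i)
    (h01 : ∀ i j, p i j = 0 ∨ p i j = 1) :
    IsStrongPartialSemimetric p ↔
      ∃ S : Set (Fin n), ∀ i j, p i j = 1 ↔ (i ∈ S ∨ j ∈ S) :=
  stmt_10_general n p h01
end

section
/- Let n ≥ 1, let d : Fin n → Fin n → ℝ be symmetric with d i i = 0 and d i j ∈ {0, 1} for all i, j, and let w : Fin n → ℝ with w i ∈ {0, 1} for all i. Then [d is a semimetric and d i j ≥ w i − w j for all i, j] if and only if [the relation { (i,j) : d i j = 0 } is transitive and d i j = 0 implies w i = w j for all i, j]. (Thus the 0,1-valued down-weighted semimetrics are exactly the pairs (δ(𝒮); w) where δ(𝒮) is a multicut semimetric and the weight w is 0,1-valued and constant on each part of the partition 𝒮.) -/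
section ZeroOneDistance

variable {α : Type*} {d : α → α → ℝ} {w : α → ℝ}

theorem zero_trans_of_triangle (hnn : ∀ i j, 0 ≤ d i j)
    (htri : ∀ i j k, d i j ≤ d i k + d k j) {i j k : α} (hij : d i j = 0) (hjk : d j k = 0) :
    d i k = 0 :=
  le_antisymm (by linarith [htri i k j]) (hnn i k)

theorem eq_of_dist_eq_zero_of_downWeighted (hsym : ∀ i j, d i j = d j i)
    (hdw : ∀ i j, w i - w j ≤ d i j) {i j : α} (h : d i j = 0) : w i = w j := by
  have hji := hdw j i
  rw [hsym, h] at hji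
  linarith [hdw i j]

theorem nonneg_of_zero_or_one (hd01 : ∀ i j, d i j = 0 ∨ d i j = 1) (i j : α) : 0 ≤ d i j := by
  rcases hd01 i j with h | h <;> simp [h]

/-- A `0,1`-valued distance satisfies the triangle inequality as soon as its zero set is
transitive: the right-hand side can only vanish when both summands do. -/
theorem triangle_of_zero_or_one (hd01 : ∀ i j, d i j = 0 ∨ d i j = 1)
    (htr : ∀ i j k, d i j = 0 → d j k = 0 → d i k = 0) (i j k : α) :
    d i j ≤ d i k + d k j := by
  have hnn := nonneg_of_zero_or_one hd01
  rcases hd01 i k with hik | hik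
  · rcases hd01 k j with hkj | hkj
    · linarith [htr i k j hik hkj]
    · rcases hd01 i j with h | h <;> linarith [hnn i k]
  · rcases hd01 i j with h | h <;> linarith [hnn k j]

theorem downWeighted_of_zero_or_one (hd01 : ∀ i j, d i j = 0 ∨ d i j = 1)
    (hw01 : ∀ i, w i = 0 ∨ w i = 1) (hwc : ∀ i j, d i j = 0 → w i = w j) (i j : α) :
    w i - w j ≤ d i j := by
  rcases hd01 i j with h | h
  · simp [hwc i j h, h]
  · rcases hw01 i with hi | hi <;> rcases hw01 j with hj | hj <;> linarith

end ZeroOneDistance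

theorem stmt_11_general (n : ℕ) (d : Fin n → Fin n → ℝ) (w : Fin n → ℝ)
    (hsym : ∀ i j, d i j = d j i) (hdiag : ∀ i, d i i = 0)
    (hd01 : ∀ i j, d i j = 0 ∨ d i j = 1)
    (hw01 : ∀ i, w i = 0 ∨ w i = 1) :
    (IsSemimetric d ∧ ∀ i j, w i - w j ≤ d i j) ↔
      (Transitive (fun i j => d i j = 0) ∧ ∀ i j, d i j = 0 → w i = w j) := by
  constructor
  · rintro ⟨⟨-, -, hnn, htri⟩, hdw⟩
    exact ⟨fun _ _ _ => zero_trans_of_triangle hnn htri,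
      fun _ _ => eq_of_dist_eq_zero_of_downWeighted hsym hdw⟩
  · rintro ⟨htr, hwc⟩
    exact ⟨⟨hsym, hdiag, nonneg_of_zero_or_one hd01,
        triangle_of_zero_or_one hd01 fun _ _ _ => @htr _ _ _⟩,
      downWeighted_of_zero_or_one hd01 hw01 hwc⟩

/-- the 0,1-valued down-weighted semimetrics are exactly the
multicuts equipped with a 0,1-weight constant on each part. -/
theorem stmt_11 (n : ℕ) (hn : 1 ≤ n) (d : Fin n → Fin n → ℝ) (w : Fin n → ℝ)
    (hsym : ∀ i j, d i j = d j i) (hdiag : ∀ i, d i i = 0)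
    (hd01 : ∀ i j, d i j = 0 ∨ d i j = 1)
    (hw01 : ∀ i, w i = 0 ∨ w i = 1) :
    (IsSemimetric d ∧ ∀ i j, w i - w j ≤ d i j) ↔
      (Transitive (fun i j => d i j = 0) ∧ ∀ i j, d i j = 0 → w i = w j) :=
  stmt_11_general n d w hsym hdiag hd01 hw01
end

section
/- Let n ≥ 1 and let q : Fin n → Fin n → ℝ be a function with q i j ∈ {0, 1} for all i, j. Then q is a quasi-semimetric that is weightable with some nonnegative weight w if and only if there exist an equivalence relation ∼ on Fin n and a subset A ⊆ Fin n that is a union of ∼-classes (i.e., i ∼ j implies (i ∈ A ↔ j ∈ A)) such that for all i, j: q i j = 1 ↔ (¬(i ∼ j) ∧ ¬(i ∈ A ∧ j ∉ A)). (Thus the 0,1-valued weightable quasi-semimetrics are exactly the functions δ(𝒮) − δ'(Â), where 𝒮 is a partition, Â a union of its parts, and δ'(Â) the oriented cut of Â.) -/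
variable {α : Type*}

section CutSemimetric

variable {r : α → α → Prop} {A : Set α}

open Classical in
/-- The function `δ(𝒮) - δ'(A)`, for the partition `𝒮` into classes of `r`. -/
noncomputable def cutSemimetric (r : α → α → Prop) (A : Set α) (i j : α) : ℝ :=
  if ¬r i j ∧ ¬(i ∈ A ∧ j ∉ A) then 1 else 0

theorem cutSemimetric_nonneg (i j : α) : 0 ≤ cutSemimetric r A i j := by
  unfold cutSemimetric
  split_ifs <;> norm_num

theorem cutSemimetric_self (hr : ∀ i, r i i) (i : α) : cutSemimetric r A i i = 0 :=
  if_neg fun h => h.1 (hr i)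

theorem cutSemimetric_triangle (hr : Equivalence r) (hA : ∀ i j, r i j → (i ∈ A ↔ j ∈ A))
    (i j k : α) : cutSemimetric r A i j ≤ cutSemimetric r A i k + cutSemimetric r A k j := by
  unfold cutSemimetric
  split_ifs with hij hik hkj <;> norm_num
  have hAik := hA i k
  have hAkj := hA k j
  have htrans := @hr.trans i k j
  tauto

theorem cutSemimetric_add_indicator (hr : Equivalence r) (hA : ∀ i j, r i j → (i ∈ A ↔ j ∈ A))
    (i j : α) :
    cutSemimetric r A i j + A.indicator 1 i = cutSemimetric r A j i + A.indicator 1 j := by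
  classical
  have hsymm : r i j ↔ r j i := ⟨hr.symm, hr.symm⟩
  by_cases hi : i ∈ A <;> by_cases hj : j ∈ A
  · simp [cutSemimetric, hi, hj, hsymm]
  · have hji : ¬r j i := fun h => hj ((hA j i h).2 hi)
    simp [cutSemimetric, hi, hj, hji]
  · have hji : ¬r j i := fun h => hi ((hA j i h).1 hj)
    simp [cutSemimetric, hi, hj, hsymm, hji]
  · simp [cutSemimetric, hi, hj, hsymm]

theorem eq_cutSemimetric {q : α → α → ℝ} (h01 : ∀ i j, q i j = 0 ∨ q i j = 1)
    (hq : ∀ i j, q i j = 1 ↔ (¬r i j ∧ ¬(i ∈ A ∧ j ∉ A))) : q = cutSemimetric r A := by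
  funext i j
  unfold cutSemimetric
  split_ifs with h
  · exact (hq i j).2 h
  · exact (h01 i j).resolve_right fun h1 => h ((hq i j).1 h1)

end CutSemimetric

section Weightable

variable {q : α → α → ℝ} {w : α → ℝ}

theorem eq_zero_trans (hnn : ∀ i j, 0 ≤ q i j) (htri : ∀ i j k, q i j ≤ q i k + q k j)
    {i j k : α} (hik : q i k = 0) (hkj : q k j = 0) : q i j = 0 :=
  le_antisymm (by linarith [htri i j k]) (hnn i j)

theorem equivalence_eq_zero_and_eq_zero (hnn : ∀ i j, 0 ≤ q i j) (hzero : ∀ i, q i i = 0)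
    (htri : ∀ i j k, q i j ≤ q i k + q k j) : Equivalence fun i j => q i j = 0 ∧ q j i = 0 where
  refl i := ⟨hzero i, hzero i⟩
  symm h := ⟨h.2, h.1⟩
  trans h₁ h₂ := ⟨eq_zero_trans hnn htri h₁.1 h₂.1, eq_zero_trans hnn htri h₂.2 h₁.2⟩

theorem weight_eq_add_one_of_lt (h01 : ∀ i j, q i j = 0 ∨ q i j = 1)
    (hw : ∀ i j, q i j + w i = q j i + w j) {i j : α} (h : w j < w i) : w i = w j + 1 := by
  rcases h01 i j with hij | hij <;> rcases h01 j i with hji | hji <;> linarith [hw i j]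

theorem exists_equivalence_cut_of_weightable (h01 : ∀ i j, q i j = 0 ∨ q i j = 1)
    (hnn : ∀ i j, 0 ≤ q i j) (hzero : ∀ i, q i i = 0) (htri : ∀ i j k, q i j ≤ q i k + q k j)
    (hw : ∀ i j, q i j + w i = q j i + w j) :
    ∃ (r : α → α → Prop) (A : Set α), Equivalence r ∧ (∀ i j, r i j → (i ∈ A ↔ j ∈ A)) ∧
      ∀ i j, q i j = 1 ↔ (¬r i j ∧ ¬(i ∈ A ∧ j ∉ A)) := by
  refine ⟨fun i j => q i j = 0 ∧ q j i = 0, {i | ∃ j, w j < w i},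
    equivalence_eq_zero_and_eq_zero hnn hzero htri, ?_, fun i j => ⟨?_, ?_⟩⟩
  · rintro i j ⟨hij, hji⟩
    have hwij : w i = w j := by linarith [hw i j]
    simp only [Set.mem_ofPred_eq, hwij]
  · intro hij
    refine ⟨fun h => one_ne_zero (hij.symm.trans h.1), ?_⟩
    rintro ⟨⟨k, hki⟩, hj⟩
    have hwij : w i ≤ w j := by rcases h01 j i with hji | hji <;> linarith [hw i j]
    exact hj ⟨k, hki.trans_le hwij⟩
  · rintro ⟨hr, hcut⟩
    refine (h01 i j).resolve_left fun hij => hcut ?_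
    have hji : q j i = 1 := (h01 j i).resolve_left fun hji => hr ⟨hij, hji⟩
    have hwij : w i = w j + 1 := by linarith [hw i j]
    refine ⟨⟨j, by linarith⟩, fun ⟨k, hkj⟩ => ?_⟩
    have hwik := weight_eq_add_one_of_lt h01 hw (hkj.trans (by linarith : w j < w i))
    linarith

end Weightable

theorem stmt_12_general (n : ℕ) (q : Fin n → Fin n → ℝ)
    (h01 : ∀ i j, q i j = 0 ∨ q i j = 1) :
    (IsQuasiSemimetric q ∧
        ∃ w : Fin n → ℝ, (∀ i, 0 ≤ w i) ∧ ∀ i j, q i j + w i = q j i + w j) ↔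
      ∃ (r : Fin n → Fin n → Prop) (A : Set (Fin n)),
        Equivalence r ∧ (∀ i j, r i j → (i ∈ A ↔ j ∈ A)) ∧
        ∀ i j, q i j = 1 ↔ (¬ r i j ∧ ¬(i ∈ A ∧ j ∉ A)) := by
  constructor
  · rintro ⟨⟨hnn, hzero, htri⟩, w, -, hw⟩
    exact exists_equivalence_cut_of_weightable h01 hnn hzero htri hw
  · rintro ⟨r, A, hr, hA, hq⟩
    obtain rfl := eq_cutSemimetric h01 hq
    exact ⟨⟨cutSemimetric_nonneg, cutSemimetric_self hr.refl, cutSemimetric_triangle hr hA⟩,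
      A.indicator 1, fun _ => Set.indicator_nonneg (fun _ _ => zero_le_one) _,
      cutSemimetric_add_indicator hr hA⟩

/-- the 0,1-valued weightable quasi-semimetrics are exactly the
functions `δ(𝒮) − δ'(Â)` for a partition `𝒮` and a union `Â` of its parts. -/
theorem stmt_12 (n : ℕ) (hn : 1 ≤ n) (q : Fin n → Fin n → ℝ)
    (h01 : ∀ i j, q i j = 0 ∨ q i j = 1) :
    (IsQuasiSemimetric q ∧
        ∃ w : Fin n → ℝ, (∀ i, 0 ≤ w i) ∧ ∀ i j, q i j + w i = q j i + w j) ↔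
      ∃ (r : Fin n → Fin n → Prop) (A : Set (Fin n)),
        Equivalence r ∧ (∀ i j, r i j → (i ∈ A ↔ j ∈ A)) ∧
        ∀ i j, q i j = 1 ↔ (¬ r i j ∧ ¬(i ∈ A ∧ j ∉ A)) :=
  stmt_12_general n q h01
end

section
/- Let n ≥ 1 and let p : Fin n → Fin n → ℝ be a symmetric function with p i j ∈ {0, 1} for all i, j. Then p is a partial semimetric on Fin n if and only if there exist an equivalence relation ∼ on Fin n and a set S₀ ⊆ Fin n which is either empty or a single ∼-equivalence class, such that for all i, j: p i j = 1 ↔ ((i ∈ S₀ ∧ j ∈ S₀) ∨ ¬(i ∼ j)). (Thus the 0,1-valued partial semimetrics are exactly the partial multicuts γ(S₀; S₁, …, S_t) = J(S₀) + δ(S₀, S₁, …, S_t).) -/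
theorem isPartialSemimetric_iff_of_zero_or_one {n : ℕ} {p : Fin n → Fin n → ℝ}
    (h01 : ∀ i j, p i j = 0 ∨ p i j = 1) :
    IsPartialSemimetric p ↔
      (∀ i j, p i j = 1 → p j i = 1) ∧ (∀ i j, p i i = 1 → p i j = 1) ∧
        ∀ i j k, p i j = 1 → p i k = 1 ∨ p k j = 1 := by
  have hnonneg : ∀ i j, 0 ≤ p i j := fun i j => by rcases h01 i j with h | h <;> simp [h]
  have hle_one : ∀ i j, p i j ≤ 1 := fun i j => by rcases h01 i j with h | h <;> simp [h]
  constructor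
  · rintro ⟨⟨hsym, -, htri⟩, hmono⟩
    refine ⟨fun i j h => hsym i j ▸ h, fun i j h => ?_, fun i j k h => ?_⟩
    · linarith [hmono i j, hle_one i j]
    · rcases h01 k k with hkk | hkk
      · rcases h01 i k with hik | hik
        · rcases h01 k j with hkj | hkj
          · linarith [htri i j k]
          · exact Or.inr hkj
        · exact Or.inl hik
      · exact Or.inr (le_antisymm (hle_one k j) (hkk ▸ hmono k j))
  · rintro ⟨hsymm, hmono, hcotrans⟩
    have hsym : ∀ i j, p i j = p j i := fun i j => by
      rcases h01 i j with h | h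
      · rcases h01 j i with h' | h'
        · rw [h, h']
        · simpa [h] using hsymm j i h'
      · rw [h, hsymm i j h]
    refine ⟨⟨hsym, fun i => hnonneg i i, fun i j k => ?_⟩, fun i j => ?_⟩
    · rcases h01 k k with hkk | hkk
      · rcases h01 i j with hij | hij
        · linarith [hnonneg i k, hnonneg k j]
        · rcases hcotrans i j k hij with h | h
          · linarith [hnonneg k j]
          · linarith [hnonneg i k]
      · have hik := hsymm k i (hmono k i hkk)
        linarith [hmono k j hkk, hle_one i j]
    · rcases h01 i i with hii | hii
      · exact hii ▸ hnonneg i j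
      · exact hii ▸ (hmono i j hii).ge

section PartialMulticut

variable {α : Type*}

/-- The relation `(i, j) ↦ γ(S₀; S₁, …, S_t) i j = 1`, where `S₁, …, S_t` are the classes of `r`
other than `S₀`. -/
def IsPartialMulticut (q : α → α → Prop) : Prop :=
  ∃ (r : α → α → Prop) (S₀ : Set α),
    Equivalence r ∧ (S₀ = ∅ ∨ ∃ i₀, S₀ = {j | r i₀ j}) ∧
      ∀ i j, q i j ↔ ((i ∈ S₀ ∧ j ∈ S₀) ∨ ¬ r i j)

theorem mem_of_rel_of_mem {r : α → α → Prop} {S₀ : Set α} (hr : Equivalence r)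
    (hS₀ : S₀ = ∅ ∨ ∃ i₀, S₀ = {j | r i₀ j}) {i j : α} (hi : i ∈ S₀) (hij : r i j) : j ∈ S₀ := by
  obtain rfl | ⟨i₀, rfl⟩ := hS₀
  · exact hi.elim
  · exact hr.trans hi hij

theorem isPartialMulticut_of_cotrans {q : α → α → Prop} (hsymm : ∀ i j, q i j → q j i)
    (hmono : ∀ i j, q i i → q i j) (hcotrans : ∀ i j k, q i j → q i k ∨ q k j) :
    IsPartialMulticut q := by
  let S₀ : Set α := {i | q i i}
  let r : α → α → Prop := fun i j => (i ∈ S₀ ∧ j ∈ S₀) ∨ ¬ q i j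
  have hr : Equivalence r := by
    refine ⟨fun i => (em (q i i)).imp (fun h => ⟨h, h⟩) id, ?_, ?_⟩
    · rintro i j (⟨hi, hj⟩ | hij)
      exacts [Or.inl ⟨hj, hi⟩, Or.inr (hij ∘ @hsymm j i)]
    · intro i j k hij hjk
      by_cases hj : q j j
      · have hi : q i i := by
          rcases hij with ⟨hi, -⟩ | hij
          exacts [hi, (hij (hsymm _ _ (hmono j i hj))).elim]
        have hk : q k k := by
          rcases hjk with ⟨-, hk⟩ | hjk
          exacts [hk, (hjk (hmono j k hj)).elim]
        exact Or.inl ⟨hi, hk⟩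
      · refine Or.inr fun hik => ?_
        rcases hcotrans i k j hik with h | h
        · exact hij.elim (fun h' => hj h'.2) (· h)
        · exact hjk.elim (fun h' => hj h'.1) (· h)
  refine ⟨r, S₀, hr, ?_, fun i j => ?_⟩
  · rcases S₀.eq_empty_or_nonempty with h | ⟨i₀, hi₀⟩
    · exact Or.inl h
    · refine Or.inr ⟨i₀, Set.ext fun j => ⟨fun hj => Or.inl ⟨hi₀, hj⟩, ?_⟩⟩
      rintro (⟨-, hj⟩ | hj)
      exacts [hj, (hj (hmono i₀ j hi₀)).elim]
  · have := hmono i j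
    simp only [r, S₀, Set.mem_ofPred_eq]
    tauto

theorem IsPartialMulticut.symm_mono_cotrans {q : α → α → Prop} (hq : IsPartialMulticut q) :
    (∀ i j, q i j → q j i) ∧ (∀ i j, q i i → q i j) ∧ ∀ i j k, q i j → q i k ∨ q k j := by
  obtain ⟨r, S₀, hr, hS₀, hq⟩ := hq
  have hclosed : ∀ {i j}, i ∈ S₀ → r i j → j ∈ S₀ := mem_of_rel_of_mem hr hS₀
  have hmono : ∀ i j, q i i → q i j := fun i j hii => by
    have hi : i ∈ S₀ := (((hq i i).mp hii).resolve_right (· (hr.refl i))).1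
    rw [hq]
    by_cases hj : j ∈ S₀
    exacts [Or.inl ⟨hi, hj⟩, Or.inr fun hij => hj (hclosed hi hij)]
  refine ⟨fun i j hij => ?_, hmono, fun i j k hij => ?_⟩
  · rw [hq] at hij ⊢
    exact hij.imp And.symm (· ∘ hr.symm)
  · by_cases hk : k ∈ S₀
    · exact Or.inr (hmono k j ((hq k k).mpr (Or.inl ⟨hk, hk⟩)))
    simp only [hq] at hij ⊢
    rcases hij with ⟨hi, -⟩ | hij
    · exact Or.inl (Or.inr fun hik => hk (hclosed hi hik))
    · by_contra! h
      exact hij (hr.trans h.1.2 h.2.2)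

theorem isPartialMulticut_iff {q : α → α → Prop} :
    IsPartialMulticut q ↔
      (∀ i j, q i j → q j i) ∧ (∀ i j, q i i → q i j) ∧ ∀ i j k, q i j → q i k ∨ q k j :=
  ⟨IsPartialMulticut.symm_mono_cotrans, fun ⟨hsymm, hmono, hcotrans⟩ =>
    isPartialMulticut_of_cotrans hsymm hmono hcotrans⟩

end PartialMulticut

theorem stmt_13_general (n : ℕ) (p : Fin n → Fin n → ℝ)
    (h01 : ∀ i j, p i j = 0 ∨ p i j = 1) :
    IsPartialSemimetric p ↔
      ∃ (r : Fin n → Fin n → Prop) (S₀ : Set (Fin n)),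
        Equivalence r ∧
        (S₀ = ∅ ∨ ∃ i₀, S₀ = {j | r i₀ j}) ∧
        ∀ i j, p i j = 1 ↔ ((i ∈ S₀ ∧ j ∈ S₀) ∨ ¬ r i j) := by
  rw [isPartialSemimetric_iff_of_zero_or_one h01]
  exact isPartialMulticut_iff.symm

/-- the 0,1-valued partial semimetrics are exactly the partial
multicuts `γ(S₀; S₁, …, S_t) = J(S₀) + δ(S₀, S₁, …, S_t)`. -/
theorem stmt_13 (n : ℕ) (hn : 1 ≤ n) (p : Fin n → Fin n → ℝ)
    (hsym : ∀ i j, p i j = p j i)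
    (h01 : ∀ i j, p i j = 0 ∨ p i j = 1) :
    IsPartialSemimetric p ↔
      ∃ (r : Fin n → Fin n → Prop) (S₀ : Set (Fin n)),
        Equivalence r ∧
        (S₀ = ∅ ∨ ∃ i₀, S₀ = {j | r i₀ j}) ∧
        ∀ i j, p i j = 1 ↔ ((i ∈ S₀ ∧ j ∈ S₀) ∨ ¬ r i j) :=
  stmt_13_general n p h01
end

section
/- Let n ≥ 1. The set of 0,1-valued partial semimetrics on Fin n (i.e., symmetric functions p : Fin n → Fin n → {0,1} that are partial semimetrics) is in bijection with the set of equivalence relations (Setoids) on Fin (n+1); in particular its cardinality is the Bell number B(n+1). -/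
@[ext]
structure PartialSetoid (α : Type*) where
  r : α → α → Prop
  symm : ∀ {a b}, r a b → r b a
  trans : ∀ {a b c}, r a b → r b c → r a c

namespace PartialSetoid

variable {α : Type*}

theorem refl_left (r : PartialSetoid α) {a b : α} (h : r.r a b) : r.r a a :=
  r.trans h (r.symm h)

def optionClass (r : PartialSetoid α) : Option α → Set α
  | none => ∅
  | some a => {b | r.r a b}

def toSetoidOption (r : PartialSetoid α) : Setoid (Option α) :=
  Setoid.ker r.optionClass

theorem toSetoidOption_rel (r : PartialSetoid α) (x y : Option α) :
    r.toSetoidOption x y ↔ r.optionClass x = r.optionClass y :=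
  Iff.rfl

def ofSetoidOption (s : Setoid (Option α)) : PartialSetoid α where
  r a b := s (some a) (some b) ∧ ¬ s (some a) none
  symm := fun ⟨hab, ha⟩ => ⟨s.symm hab, fun hb => ha (s.trans hab hb)⟩
  trans := fun ⟨hab, ha⟩ ⟨hbc, _⟩ => ⟨s.trans hab hbc, ha⟩

theorem ofSetoidOption_toSetoidOption (r : PartialSetoid α) :
    ofSetoidOption (toSetoidOption r) = r := by
  ext a b
  simp only [ofSetoidOption, toSetoidOption_rel, optionClass, ← Set.nonempty_iff_ne_empty]
  constructor
  · rintro ⟨hab, c, hac⟩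
    have hba : a ∈ {c | r.r b c} := hab ▸ r.refl_left hac
    exact r.symm hba
  · intro hab
    exact ⟨Set.ext fun c => ⟨r.trans (r.symm hab), r.trans hab⟩, b, hab⟩

theorem optionClass_ofSetoidOption (s : Setoid (Option α)) (x : Option α) :
    (ofSetoidOption s).optionClass x = {b | s x (some b) ∧ ¬ s x none} := by
  cases x with
  | none => simp [optionClass]
  | some a => rfl

theorem optionClass_ofSetoidOption_eq_empty (s : Setoid (Option α)) (x : Option α) :
    (ofSetoidOption s).optionClass x = ∅ ↔ s x none := by
  rw [optionClass_ofSetoidOption, Set.eq_empty_iff_forall_notMem]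
  refine ⟨fun h => ?_, fun hx b hb => hb.2 hx⟩
  cases x with
  | none => exact s.refl none
  | some a => simpa using h a

theorem toSetoidOption_ofSetoidOption (s : Setoid (Option α)) :
    toSetoidOption (ofSetoidOption s) = s := by
  ext x y
  rw [toSetoidOption_rel]
  constructor
  · intro h
    obtain hx | ⟨b, hb⟩ := (ofSetoidOption s).optionClass x |>.eq_empty_or_nonempty
    · have hy := (optionClass_ofSetoidOption_eq_empty s y).1 (h ▸ hx)
      exact s.trans ((optionClass_ofSetoidOption_eq_empty s x).1 hx) (s.symm hy)
    · have hb' := h ▸ hb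
      rw [optionClass_ofSetoidOption] at hb hb'
      exact s.trans hb.1 (s.symm hb'.1)
  · intro hxy
    rw [optionClass_ofSetoidOption, optionClass_ofSetoidOption]
    ext b
    exact ⟨fun ⟨hb, hx⟩ => ⟨s.trans (s.symm hxy) hb, fun hy => hx (s.trans hxy hy)⟩,
      fun ⟨hb, hy⟩ => ⟨s.trans hxy hb, fun hx => hy (s.trans (s.symm hxy) hx)⟩⟩

def equivSetoidOption : PartialSetoid α ≃ Setoid (Option α) where
  toFun := toSetoidOption
  invFun := ofSetoidOption
  left_inv := ofSetoidOption_toSetoidOption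
  right_inv := toSetoidOption_ofSetoidOption

end PartialSetoid

def Equiv.setoidCongr {α β : Type*} (e : α ≃ β) : Setoid α ≃ Setoid β where
  toFun s := s.comap e.symm
  invFun t := t.comap e
  left_inv s := by ext; simp [Setoid.comap_rel]
  right_inv t := by ext; simp [Setoid.comap_rel]

namespace IsPartialSemimetric

variable {n : ℕ} {p : Fin n → Fin n → ℝ}

theorem nonneg (hp : IsPartialSemimetric p) (i j : Fin n) : 0 ≤ p i j :=
  (hp.1.2.1 i).trans (hp.2 i j)

theorem eq_zero_trans (hp : IsPartialSemimetric p) {i j k : Fin n} (hik : p i k = 0)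
    (hkj : p k j = 0) : p i j = 0 := by
  have hquad := hp.1.2.2 i j k
  have hij := hp.nonneg i j
  have hkk := hp.nonneg k k
  linarith

def zeroPartialSetoid (hp : IsPartialSemimetric p) : PartialSetoid (Fin n) where
  r i j := p i j = 0
  symm h := (hp.1.1 _ _).trans h
  trans := hp.eq_zero_trans

end IsPartialSemimetric

namespace PartialSetoid

open Classical in
noncomputable def zeroOneDist {α : Type*} (r : PartialSetoid α) (a b : α) : ℝ :=
  if r.r a b then 0 else 1

theorem isPartialSemimetric_zeroOneDist {n : ℕ} (r : PartialSetoid (Fin n)) :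
    IsPartialSemimetric r.zeroOneDist := by
  refine ⟨⟨fun i j => ?_, fun i => ?_, fun i j k => ?_⟩, fun i j => ?_⟩
  · classical exact if_congr ⟨r.symm, r.symm⟩ rfl rfl
  · unfold zeroOneDist; split_ifs <;> norm_num
  · have htrans : r.r i k → r.r k j → r.r i j := r.trans
    have hkk : r.r i k ∨ r.r k j → r.r k k := by
      rintro (h | h)
      exacts [r.refl_left (r.symm h), r.refl_left h]
    unfold zeroOneDist; split_ifs <;> norm_num <;> tauto
  · unfold zeroOneDist
    split_ifs with hii hij hij <;> norm_num
    exact hii (r.refl_left hij)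

end PartialSetoid

noncomputable def zeroOnePartialSemimetricEquiv (n : ℕ) :
    {p : Fin n → Fin n → ℝ // (∀ i j, p i j = 0 ∨ p i j = 1) ∧ IsPartialSemimetric p}
      ≃ PartialSetoid (Fin n) where
  toFun p := p.2.2.zeroPartialSetoid
  invFun r := ⟨r.zeroOneDist, fun i j => by unfold PartialSetoid.zeroOneDist; split_ifs <;> simp,
    r.isPartialSemimetric_zeroOneDist⟩
  left_inv p := by
    ext i j
    rcases p.2.1 i j with h | h <;>
      simp [PartialSetoid.zeroOneDist, IsPartialSemimetric.zeroPartialSetoid, h]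
  right_inv r := by
    ext i j
    simp [PartialSetoid.zeroOneDist, IsPartialSemimetric.zeroPartialSetoid]

theorem stmt_14_general (n : ℕ) :
    Nonempty
      ({p : Fin n → Fin n → ℝ //
          (∀ i j, p i j = 0 ∨ p i j = 1) ∧ IsPartialSemimetric p}
        ≃ Setoid (Fin (n + 1))) :=
  ⟨(zeroOnePartialSemimetricEquiv n).trans <|
    PartialSetoid.equivSetoidOption.trans (finSuccEquiv n).symm.setoidCongr⟩

/-- the 0,1-valued partial semimetrics on `Fin n` are in bijection
with the equivalence relations on `Fin (n+1)`; hence there are `B(n+1)` of them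
(the Bell number). -/
theorem stmt_14 (n : ℕ) (hn : 1 ≤ n) :
    Nonempty
      ({p : Fin n → Fin n → ℝ //
          (∀ i j, p i j = 0 ∨ p i j = 1) ∧ IsPartialSemimetric p}
        ≃ Setoid (Fin (n + 1))) :=
  stmt_14_general n
end

section
/- Let n ≥ 1, let ∼ be an equivalence relation on Fin n with multicut δ (δ i j = 1 if ¬(i ∼ j), else 0), and let b : Fin n → ℤ. For each equivalence class C of ∼ put r_C = Σ_{i ∈ C} b i, and let Σ_b = Σ_i b i. Then −Σ_{i,j ∈ Fin n} b i · b j · δ i j = Σ_C r_C (r_C − Σ_b), the sum over all equivalence classes C. Consequently, if Σ_b ∈ {0, 1}, then −Σ_{i,j} b i · b j · δ i j ≥ 0, i.e., every multicut semimetric is a hypermetric. -/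
/-!
Writing `δ i j = 1 - [i ∼ j]`, the double sum splits as `(Σ_b)² - Σ_{i ∼ j} b i b j`, and grouping
the second sum by classes gives `Σ_C r_C²`. Since the `r_C` add up to `Σ_b`, the form equals
`Σ_C r_C (r_C - Σ_b)`. When `Σ_b ∈ {0, 1}` every term is `r² ≥ 0` or `r (r - 1) ≥ 0`, the latter
because no integer lies strictly between `0` and `1`.
-/

open Finset

theorem sum_sum_ite_eq_sum_sq_fiberwise {ι κ R : Type*} [Fintype ι] [Fintype κ]
    [DecidableEq κ] [CommSemiring R] (f : ι → κ) (b : ι → R) :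
    ∑ i, ∑ j, (if f i = f j then b i * b j else 0)
      = ∑ c, (∑ i ∈ univ.filter (f · = c), b i) ^ 2 := by
  set g : κ → R := fun c => ∑ i ∈ univ.filter (f · = c), b i
  have h_inner : ∀ i, ∑ j, (if f i = f j then b i * b j else 0) = b i * g (f i) := by
    intro i
    simp only [g, mul_sum, sum_filter, mul_ite, mul_zero, eq_comm (a := f i)]
  calc ∑ i, ∑ j, (if f i = f j then b i * b j else 0)
      = ∑ c, ∑ i ∈ univ.filter (f · = c), b i * g (f i) := by
        simp only [h_inner, sum_fiberwise]
    _ = ∑ c, ∑ i ∈ univ.filter (f · = c), b i * g c :=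
        sum_congr rfl fun c _ => sum_congr rfl fun i hi => by rw [(mem_filter.mp hi).2]
    _ = ∑ c, g c ^ 2 := by simp only [← sum_mul, g, sq]

theorem neg_sum_sum_mul_multicut_eq {ι R : Type*} [Fintype ι] [CommRing R] (s : Setoid ι)
    [DecidableRel ((· ≈ ·) : ι → ι → Prop)] (b : ι → R) (δ : ι → ι → R)
    (hδ0 : ∀ i j, i ≈ j → δ i j = 0) (hδ1 : ∀ i j, ¬ i ≈ j → δ i j = 1)
    (r : Quotient s → R)
    (hr : ∀ c, r c = ∑ i ∈ univ.filter (fun i => Quotient.mk s i = c), b i) :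
    -∑ i, ∑ j, b i * b j * δ i j = ∑ c, r c * (r c - ∑ i, b i) := by
  have hδ : ∀ i j, δ i j = 1 - if Quotient.mk s i = Quotient.mk s j then 1 else 0 := by
    intro i j
    by_cases h : i ≈ j <;> simp [h, hδ0, hδ1, Quotient.eq]
  have h_split : ∑ i, ∑ j, b i * b j * δ i j
      = (∑ i, b i) ^ 2 - ∑ i, ∑ j,
          (if Quotient.mk s i = Quotient.mk s j then b i * b j else 0) := by
    simp only [hδ, mul_sub, mul_one, mul_ite, mul_zero, sum_sub_distrib, sq, sum_mul_sum]
  have h_classes : ∑ c, r c = ∑ i, b i := by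
    simp only [hr, sum_fiberwise]
  rw [h_split, sum_sum_ite_eq_sum_sq_fiberwise, ← h_classes]
  simp only [← hr, mul_sub, sum_sub_distrib, ← sum_mul, sq]
  ring

theorem Int.mul_sub_nonneg_of_eq_zero_or_eq_one (x t : ℤ) (ht : t = 0 ∨ t = 1) :
    0 ≤ x * (x - t) := by
  rcases ht with rfl | rfl
  · simpa using mul_self_nonneg x
  · rcases le_or_gt x 0 with hx | hx <;> nlinarith

theorem stmt_15_general (n : ℕ) (s : Setoid (Fin n))
    [DecidableRel ((· ≈ ·) : Fin n → Fin n → Prop)]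
    (b : Fin n → ℤ) (δ : Fin n → Fin n → ℝ)
    (hδ0 : ∀ i j, i ≈ j → δ i j = 0)
    (hδ1 : ∀ i j, ¬ i ≈ j → δ i j = 1)
    (r : Quotient s → ℤ)
    (hr : ∀ c : Quotient s,
      r c = ∑ i ∈ Finset.univ.filter (fun i => Quotient.mk s i = c), b i) :
    (-∑ i, ∑ j, (b i : ℝ) * (b j : ℝ) * δ i j
        = ∑ c : Quotient s, (r c : ℝ) * ((r c : ℝ) - ((∑ i, b i : ℤ) : ℝ))) ∧
    (((∑ i, b i) = 0 ∨ (∑ i, b i) = 1) →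
      0 ≤ -∑ i, ∑ j, (b i : ℝ) * (b j : ℝ) * δ i j) := by
  have h_form := neg_sum_sum_mul_multicut_eq s (fun i => (b i : ℝ)) δ hδ0 hδ1 (fun c => (r c : ℝ))
    (fun c => by simp [hr c])
  push_cast
  refine ⟨h_form, fun hS => h_form ▸ sum_nonneg fun c _ => ?_⟩
  exact_mod_cast Int.mul_sub_nonneg_of_eq_zero_or_eq_one (r c) _ hS

/-- evaluation of the hypermetric form on a multicut semimetric:
`−Σ_{i,j} b i b j δ i j = Σ_C r_C (r_C − Σ_b)` (sum over equivalence classes),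
whence every multicut is hypermetric. -/
theorem stmt_15 (n : ℕ) (hn : 1 ≤ n) (s : Setoid (Fin n))
    [DecidableRel ((· ≈ ·) : Fin n → Fin n → Prop)]
    (b : Fin n → ℤ) (δ : Fin n → Fin n → ℝ)
    (hδ0 : ∀ i j, i ≈ j → δ i j = 0)
    (hδ1 : ∀ i j, ¬ i ≈ j → δ i j = 1)
    (r : Quotient s → ℤ)
    (hr : ∀ c : Quotient s,
      r c = ∑ i ∈ Finset.univ.filter (fun i => Quotient.mk s i = c), b i) :
    (-∑ i, ∑ j, (b i : ℝ) * (b j : ℝ) * δ i j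
        = ∑ c : Quotient s, (r c : ℝ) * ((r c : ℝ) - ((∑ i, b i : ℤ) : ℝ))) ∧
    (((∑ i, b i) = 0 ∨ (∑ i, b i) = 1) →
      0 ≤ -∑ i, ∑ j, (b i : ℝ) * (b j : ℝ) * δ i j) :=
  stmt_15_general n s b δ hδ0 hδ1 r hr
end

section
/- Let n ≥ 1, let ∼ be an equivalence relation on Fin n, and let S₀ ⊆ Fin n be either empty or a single ∼-equivalence class. Let p be the partial multicut: p i j = 1 if (i ∈ S₀ ∧ j ∈ S₀) ∨ ¬(i ∼ j), and p i j = 0 otherwise. Then for every b : Fin n → ℤ with Σ_i b i ∈ {0, 1}, the partial hypermetric inequality holds: −Σ_{i,j ∈ Fin n} b i · b j · p i j + Σ_i b i · p i i ≥ 0. (Thus every 0,1-valued partial semimetric is a partial hypermetric, i.e., 0,1-PMET_n ⊆ PHYP_n.) -/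
/-!
Write `p = 1 - q`, where `q i j = 1` exactly when `i ∼ j` and `i ∉ S₀`; since `S₀` is a union of
classes, `q` is the same-class indicator seen by the weights `u = b · 1_{S₀ᶜ}`. With
`σ = ∑ b i ∈ {0, 1}` the hypermetric form becomes `(σ - σ²) + ∑_C (U_C² - U_C)`, where `U_C` is
the total `u`-weight of the class `C`, and every term is nonnegative since `m ≤ m²` on `ℤ`.
-/

open Finset

variable {α κ : Type*}

theorem Equivalence.mem_iff_mem_of_eq_empty_or_class {r : α → α → Prop} (hr : Equivalence r)
    {S : Set α} (hS : S = ∅ ∨ ∃ i₀, S = {j | r i₀ j}) {i j : α} (hij : r i j) :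
    i ∈ S ↔ j ∈ S := by
  rcases hS with rfl | ⟨i₀, rfl⟩
  · simp
  · exact ⟨fun h => hr.trans h hij, fun h => hr.trans h (hr.symm hij)⟩

theorem partialMulticut_eq_ite {r : α → α → Prop} [DecidableRel r] {S : Set α}
    [DecidablePred (· ∈ S)] (hS : ∀ i j, r i j → (i ∈ S ↔ j ∈ S)) {p : α → α → ℝ}
    (hp1 : ∀ i j, ((i ∈ S ∧ j ∈ S) ∨ ¬ r i j) → p i j = 1)
    (hp0 : ∀ i j, ¬((i ∈ S ∧ j ∈ S) ∨ ¬ r i j) → p i j = 0) (i j : α) :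
    p i j = if r i j ∧ i ∉ S then 0 else 1 := by
  by_cases hij : r i j
  · by_cases hi : i ∈ S
    · simp [hij, hi, hp1 i j (.inl ⟨hi, (hS i j hij).1 hi⟩)]
    · simp [hij, hi, hp0 i j (by simp [hij, hi])]
  · simp [hij, hp1 i j (.inr hij)]

variable [Fintype α]

theorem Finset.sum_sum_ite_eq_mul_eq_sum_sq [Fintype κ] [DecidableEq κ] (f : α → κ)
    (b : α → ℤ) :
    ∑ i, ∑ j, (if f i = f j then b i * b j else 0) = ∑ k, (∑ i with f i = k, b i) ^ 2 := by
  set B : κ → ℤ := fun k => ∑ i with f i = k, b i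
  calc ∑ i, ∑ j, (if f i = f j then b i * b j else 0)
      = ∑ i, b i * B (f i) := by
        refine sum_congr rfl fun i _ => ?_
        simp only [B, ← sum_filter, mul_sum, eq_comm]
    _ = ∑ k, ∑ i with f i = k, b i * B k := by
        rw [← sum_fiberwise univ f]
        refine sum_congr rfl fun k _ => sum_congr rfl fun i hi => ?_
        rw [(mem_filter.1 hi).2]
    _ = ∑ k, B k ^ 2 := by simp only [← sum_mul, sq, B]

theorem Finset.sum_le_sum_sum_ite_eq_mul [Fintype κ] [DecidableEq κ] (f : α → κ)
    (b : α → ℤ) :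
    ∑ i, b i ≤ ∑ i, ∑ j, (if f i = f j then b i * b j else 0) := by
  rw [sum_sum_ite_eq_mul_eq_sum_sq, ← sum_fiberwise univ f]
  exact sum_le_sum fun k _ => Int.le_self_sq _

theorem Equivalence.sum_le_sum_sum_ite_mul {r : α → α → Prop} [DecidableRel r]
    (hr : Equivalence r) (b : α → ℤ) :
    ∑ i, b i ≤ ∑ i, ∑ j, (if r i j then b i * b j else 0) := by
  classical
  let s : Setoid α := ⟨r, hr⟩
  convert sum_le_sum_sum_ite_eq_mul (Quotient.mk s) b using 4 with i _ j
  exact (Quotient.eq (r := s)).symm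

theorem partialMulticut_hypermetric {r : α → α → Prop} [DecidableRel r] (hr : Equivalence r)
    {S : Set α} [DecidablePred (· ∈ S)] (hS : ∀ i j, r i j → (i ∈ S ↔ j ∈ S))
    {p : α → α → ℝ} (hp : ∀ i j, p i j = if r i j ∧ i ∉ S then 0 else 1)
    (b : α → ℤ) (hb : (∑ i, b i) = 0 ∨ (∑ i, b i) = 1) :
    0 ≤ -(∑ i, ∑ j, (b i : ℝ) * (b j : ℝ) * p i j) + ∑ i, (b i : ℝ) * p i i := by
  set u : α → ℤ := fun i => if i ∈ S then 0 else b i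
  have hoff : ∀ i j, (b i : ℝ) * b j * p i j
      = b i * b j - ((if r i j then u i * u j else 0 : ℤ) : ℝ) := by
    intro i j
    by_cases hij : r i j
    · by_cases hi : i ∈ S
      · simp [u, hp, hij, hi, (hS i j hij).1 hi]
      · simp [u, hp, hij, hi, (hS i j hij).not.1 hi]
    · simp [hp, hij]
  have hdiag : ∀ i, (b i : ℝ) * p i i = b i - u i := by
    intro i
    by_cases hi : i ∈ S <;> simp [u, hp, hi, hr.refl i]
  have hσ : ((∑ i, b i : ℤ) : ℝ) * (∑ i, b i : ℤ) = (∑ i, b i : ℤ) := by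
    rcases hb with h | h <;> simp [h]
  have hu : ((∑ i, u i : ℤ) : ℝ) ≤ ((∑ i, ∑ j, (if r i j then u i * u j else 0) : ℤ) : ℝ) := by
    exact_mod_cast hr.sum_le_sum_sum_ite_mul u
  simp only [hoff, hdiag, sum_sub_distrib, ← sum_mul_sum]
  push_cast at hσ hu ⊢
  linarith

theorem stmt_16_general (n : ℕ)
    (r : Fin n → Fin n → Prop) (hr : Equivalence r)
    (S₀ : Set (Fin n)) (hS₀ : S₀ = ∅ ∨ ∃ i₀, S₀ = {j | r i₀ j})
    (p : Fin n → Fin n → ℝ)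
    (hp1 : ∀ i j, ((i ∈ S₀ ∧ j ∈ S₀) ∨ ¬ r i j) → p i j = 1)
    (hp0 : ∀ i j, ¬((i ∈ S₀ ∧ j ∈ S₀) ∨ ¬ r i j) → p i j = 0) :
    ∀ b : Fin n → ℤ, ((∑ i, b i) = 0 ∨ (∑ i, b i) = 1) →
      0 ≤ -(∑ i, ∑ j, (b i : ℝ) * (b j : ℝ) * p i j) + ∑ i, (b i : ℝ) * p i i := by
  classical
  have hS : ∀ i j, r i j → (i ∈ S₀ ↔ j ∈ S₀) := fun _ _ =>
    hr.mem_iff_mem_of_eq_empty_or_class hS₀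
  exact partialMulticut_hypermetric hr hS (partialMulticut_eq_ite hS hp1 hp0)

/-- every partial multicut satisfies all partial hypermetric
inequalities, i.e. `0,1`-`PMET_n ⊆ PHYP_n`. -/
theorem stmt_16 (n : ℕ) (hn : 1 ≤ n)
    (r : Fin n → Fin n → Prop) (hr : Equivalence r)
    (S₀ : Set (Fin n)) (hS₀ : S₀ = ∅ ∨ ∃ i₀, S₀ = {j | r i₀ j})
    (p : Fin n → Fin n → ℝ)
    (hp1 : ∀ i j, ((i ∈ S₀ ∧ j ∈ S₀) ∨ ¬ r i j) → p i j = 1)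
    (hp0 : ∀ i j, ¬((i ∈ S₀ ∧ j ∈ S₀) ∨ ¬ r i j) → p i j = 0) :
    ∀ b : Fin n → ℤ, ((∑ i, b i) = 0 ∨ (∑ i, b i) = 1) →
      0 ≤ -(∑ i, ∑ j, (b i : ℝ) * (b j : ℝ) * p i j) + ∑ i, (b i : ℝ) * p i i :=
  stmt_16_general n r hr S₀ hS₀ p hp1 hp0
end

section
/- Let n ≥ 1. Consider the subspace E of real n × n matrices E with zero diagonal such that Σ_{i,j} E i j · q i j = 0 for every quasi-semimetric q on Fin n that is weightable with some nonnegative weight. Then E is spanned by the matrices E_{ijk} (for pairwise distinct i, j, k ∈ Fin n) having entry +1 at positions (i,j), (j,k), (k,i), entry −1 at positions (j,i), (k,j), (i,k), and 0 elsewhere; in particular, E has dimension (n−1 choose 2). (Equivalently: every weightable quasi-semimetric q satisfies q i j + q j k + q k i = q j i + q k j + q i k for all i, j, k, and these are, up to linear combination, the only linear equalities valid on the cone WQMET_n.) -/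
/-- A weightable quasi-semimetric with nonnegative weight (element of `WQMET_n`). -/
def IsWQMET {n : ℕ} (q : Fin n → Fin n → ℝ) : Prop :=
  IsQuasiSemimetric q ∧
    ∃ w : Fin n → ℝ, (∀ i, 0 ≤ w i) ∧ ∀ i j, q i j + w i = q j i + w j

/-- The matrix `E_{ijk}` with entries `+1` at `(i,j), (j,k), (k,i)`,
`−1` at `(j,i), (k,j), (i,k)` and `0` elsewhere. -/
def Emat {n : ℕ} (i j k : Fin n) : Matrix (Fin n) (Fin n) ℝ :=
  Matrix.of fun a b =>
    (if (a = i ∧ b = j) ∨ (a = j ∧ b = k) ∨ (a = k ∧ b = i) then (1 : ℝ) else 0)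
      - (if (a = j ∧ b = i) ∨ (a = k ∧ b = j) ∨ (a = i ∧ b = k) then (1 : ℝ) else 0)

/-!
Let `T` be the space of skew-symmetric matrices with zero row sums. Pairing with the directed
cut quasi-semimetrics `δ_S i j = [i ∈ S ∧ j ∉ S]` (weight `[· ∉ S]`) for `S = {a}` and
`S = {a, b}` forces a zero-diagonal annihilator of `WQMET_n` into `T`. Conversely, for `E ∈ T`
and `q` weightable with weight `w`, `2 ∑ E i j q i j = ∑ E i j (q i j - q j i) =
∑ E i j (w j - w i) = 0`. An element of `T` is determined by its entries `E a b` with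
`0 < a < b`: the row sums recover the entries of row and column `0`. Hence the matrices
`E_{0ab}`, `0 < a < b`, form a basis of `T`, and there are `(n - 1).choose 2` of them.
-/

open Finset

def skewZeroRowSum (ι : Type*) [Fintype ι] : Submodule ℝ (Matrix ι ι ℝ) where
  carrier := {E | (∀ a b, E b a = -E a b) ∧ ∀ a, ∑ b, E a b = 0}
  add_mem' := by
    rintro E F ⟨hE, hE'⟩ ⟨hF, hF'⟩
    refine ⟨fun a b => ?_, fun a => ?_⟩
    · simp only [Matrix.add_apply, hE a b, hF a b, neg_add]
    · simp only [Matrix.add_apply, sum_add_distrib, hE' a, hF' a, add_zero]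
  zero_mem' := ⟨fun _ _ => by simp, fun _ => by simp⟩
  smul_mem' := by
    rintro t E ⟨hE, hE'⟩
    refine ⟨fun a b => ?_, fun a => ?_⟩
    · simp only [Matrix.smul_apply, hE a b, smul_eq_mul, mul_neg]
    · simp only [Matrix.smul_apply, smul_eq_mul, ← mul_sum, hE' a, mul_zero]

namespace skewZeroRowSum

variable {ι : Type*} [Fintype ι] {E : Matrix ι ι ℝ}

theorem apply_self_eq_zero (hE : E ∈ skewZeroRowSum ι) (a : ι) : E a a = 0 := by
  linarith [hE.1 a a]

theorem sum_col_eq_zero (hE : E ∈ skewZeroRowSum ι) (b : ι) : ∑ a, E a b = 0 := by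
  simp only [hE.1 b, sum_neg_distrib, hE.2 b, neg_zero]

theorem sum_mul_eq_zero_of_weightable (hE : E ∈ skewZeroRowSum ι) {q : ι → ι → ℝ} {w : ι → ℝ}
    (hw : ∀ i j, q i j + w i = q j i + w j) : ∑ i, ∑ j, E i j * q i j = 0 := by
  have hdouble : 2 * ∑ i, ∑ j, E i j * q i j = ∑ i, ∑ j, E i j * (w j - w i) := by
    calc 2 * ∑ i, ∑ j, E i j * q i j = ∑ i, ∑ j, E i j * q i j + ∑ i, ∑ j, E j i * q j i := by
          rw [two_mul]
          congr 1
          exact sum_comm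
      _ = ∑ i, ∑ j, E i j * (w j - w i) := by
          simp only [← sum_add_distrib]
          refine sum_congr rfl fun i _ => sum_congr rfl fun j _ => ?_
          rw [hE.1 i j]
          linear_combination E i j * hw i j
  have hgrad : ∑ i, ∑ j, E i j * (w j - w i) = 0 := by
    simp only [mul_sub, sum_sub_distrib]
    rw [sum_comm]
    simp only [← sum_mul, sum_col_eq_zero hE, hE.2, zero_mul, sum_const_zero, sub_zero]
  linarith

theorem eq_zero_of_apply_succ_succ {m : ℕ} {D : Matrix (Fin (m + 1)) (Fin (m + 1)) ℝ}
    (hD : D ∈ skewZeroRowSum (Fin (m + 1))) (h : ∀ a b : Fin m, a < b → D a.succ b.succ = 0) :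
    D = 0 := by
  have hsucc (a b : Fin m) : D a.succ b.succ = 0 := by
    rcases lt_trichotomy a b with hab | rfl | hab
    · exact h a b hab
    · exact apply_self_eq_zero hD _
    · rw [hD.1, h b a hab, neg_zero]
  have hcol (b : Fin m) : D b.succ 0 = 0 := by
    simpa [Fin.sum_univ_succ, hsucc] using hD.2 b.succ
  ext a b
  induction a using Fin.cases <;> induction b using Fin.cases
  · exact apply_self_eq_zero hD 0
  · rw [hD.1, hcol, neg_zero]; rfl
  · exact hcol _
  · exact hsucc _ _

end skewZeroRowSum

def directedCut {ι : Type*} [DecidableEq ι] (s : Finset ι) (i j : ι) : ℝ :=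
  if i ∈ s ∧ j ∉ s then 1 else 0

theorem isWQMET_directedCut {n : ℕ} (s : Finset (Fin n)) : IsWQMET (directedCut s) := by
  refine ⟨⟨fun i j => ?_, fun i => ?_, fun i j k => ?_⟩, fun i => if i ∈ s then 0 else 1,
    fun i => ?_, fun i j => ?_⟩ <;> simp only [directedCut] <;> split_ifs <;> grind

theorem sum_mul_directedCut {ι : Type*} [Fintype ι] [DecidableEq ι] (E : Matrix ι ι ℝ)
    (s : Finset ι) : ∑ i, ∑ j, E i j * directedCut s i j = ∑ i ∈ s, ∑ j ∈ sᶜ, E i j := by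
  simp only [directedCut, mul_ite, mul_one, mul_zero, ite_and]
  simp only [sum_ite_irrel, sum_const_zero, ← sum_filter]
  rw [← compl_filter, filter_mem_eq_inter, univ_inter]

theorem mem_skewZeroRowSum_of_forall_isWQMET {n : ℕ} {E : Matrix (Fin n) (Fin n) ℝ}
    (hd : ∀ i, E i i = 0)
    (hq : ∀ q : Fin n → Fin n → ℝ, IsWQMET q → ∑ i, ∑ j, E i j * q i j = 0) :
    E ∈ skewZeroRowSum (Fin n) := by
  have hcut (s : Finset (Fin n)) : ∑ i ∈ s, ∑ j ∈ sᶜ, E i j = 0 := by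
    rw [← sum_mul_directedCut]
    exact hq _ (isWQMET_directedCut s)
  have hrow (a : Fin n) : ∑ b, E a b = 0 := by
    have h := hcut {a}
    rw [sum_singleton] at h
    rw [← sum_compl_add_sum {a}, h, sum_singleton, hd, add_zero]
  have hblock (s : Finset (Fin n)) : ∑ i ∈ s, ∑ j ∈ s, E i j = 0 := by
    calc ∑ i ∈ s, ∑ j ∈ s, E i j = ∑ i ∈ s, (∑ j, E i j - ∑ j ∈ sᶜ, E i j) :=
          sum_congr rfl fun i _ => by rw [← sum_compl_add_sum s]; ring
      _ = 0 := by simp only [sum_sub_distrib, hrow, sum_const_zero, hcut, sub_zero]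
  refine ⟨fun a b => ?_, hrow⟩
  rcases eq_or_ne a b with rfl | hab
  · simp [hd]
  · have h := hblock {a, b}
    rw [sum_pair hab, sum_pair hab, sum_pair hab, hd, hd] at h
    linarith

theorem annihilator_isWQMET_eq_skewZeroRowSum (n : ℕ) :
    {E : Matrix (Fin n) (Fin n) ℝ |
        (∀ i, E i i = 0) ∧ ∀ q : Fin n → Fin n → ℝ, IsWQMET q → ∑ i, ∑ j, E i j * q i j = 0}
      = skewZeroRowSum (Fin n) := by
  ext E
  refine ⟨fun ⟨hd, hq⟩ => mem_skewZeroRowSum_of_forall_isWQMET hd hq, fun hE => ?_⟩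
  exact ⟨skewZeroRowSum.apply_self_eq_zero hE,
    fun q ⟨_, _, _, hw⟩ => skewZeroRowSum.sum_mul_eq_zero_of_weightable hE hw⟩

theorem emat_apply_swap {n : ℕ} (i j k a b : Fin n) : Emat i j k b a = -Emat i j k a b := by
  simp only [Emat, Matrix.of_apply]
  split_ifs <;> grind

theorem sum_emat_row {n : ℕ} {i j k : Fin n} (hij : i ≠ j) (hjk : j ≠ k) (hik : i ≠ k)
    (a : Fin n) : ∑ b, Emat i j k a b = 0 := by
  simp only [Emat, Matrix.of_apply, sum_sub_distrib]
  by_cases hai : a = i <;> by_cases haj : a = j <;> by_cases hak : a = k <;> subst_vars <;>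
    simp_all [eq_comm]

def trianglePatterns (n : ℕ) : Set (Matrix (Fin n) (Fin n) ℝ) :=
  {M | ∃ i j k : Fin n, i ≠ j ∧ j ≠ k ∧ i ≠ k ∧ M = Emat i j k}

theorem span_trianglePatterns_le (n : ℕ) :
    Submodule.span ℝ (trianglePatterns n) ≤ skewZeroRowSum (Fin n) := by
  rw [Submodule.span_le]
  rintro M ⟨i, j, k, hij, hjk, hik, rfl⟩
  exact ⟨emat_apply_swap i j k, sum_emat_row hij hjk hik⟩

abbrev OrderedPairs (m : ℕ) := {p : Fin m × Fin m // p.1 < p.2}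

theorem card_orderedPairs (m : ℕ) : Fintype.card (OrderedPairs m) = m.choose 2 := by
  rw [Fintype.card_subtype, Fintype.card_product_filter_lt, Fintype.card_fin]

def triangleBasis (m : ℕ) (p : OrderedPairs m) : Matrix (Fin (m + 1)) (Fin (m + 1)) ℝ :=
  Emat 0 p.1.1.succ p.1.2.succ

theorem sum_smul_triangleBasis_apply {m : ℕ} (c : OrderedPairs m → ℝ) {a b : Fin m}
    (hab : a < b) :
    (∑ p, c p • triangleBasis m p) a.succ b.succ = c ⟨(a, b), hab⟩ := by
  simp only [Matrix.sum_apply, Matrix.smul_apply, triangleBasis, Emat, Matrix.of_apply,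
    smul_eq_mul]
  rw [Fintype.sum_eq_single ⟨(a, b), hab⟩]
  · simp [hab.ne, hab.ne', Fin.succ_ne_zero]
  · rintro ⟨⟨i, j⟩, hij⟩ hp
    simp only at hij
    have hne : ¬(a = i ∧ b = j) := fun h => hp (by simp [h])
    have hrev : ¬(a = j ∧ b = i) := fun ⟨rfl, rfl⟩ => lt_asymm hab hij
    simp [Fin.succ_ne_zero, hne, hrev]

theorem linearIndependent_triangleBasis (m : ℕ) : LinearIndependent ℝ (triangleBasis m) := by
  refine Fintype.linearIndependent_iff.2 fun c hc p => ?_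
  simpa [sum_smul_triangleBasis_apply c p.2] using congr_fun (congr_fun hc p.1.1.succ) p.1.2.succ

theorem triangleBasis_mem (m : ℕ) (p : OrderedPairs m) :
    triangleBasis m p ∈ trianglePatterns (m + 1) :=
  ⟨0, p.1.1.succ, p.1.2.succ, (Fin.succ_ne_zero _).symm, (Fin.succ_lt_succ_iff.2 p.2).ne,
    (Fin.succ_ne_zero _).symm, rfl⟩

theorem triangleBasis_mem_skewZeroRowSum (m : ℕ) (p : OrderedPairs m) :
    triangleBasis m p ∈ skewZeroRowSum (Fin (m + 1)) :=
  span_trianglePatterns_le _ (Submodule.subset_span (triangleBasis_mem m p))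

theorem skewZeroRowSum.eq_sum_smul_triangleBasis {m : ℕ}
    {E : Matrix (Fin (m + 1)) (Fin (m + 1)) ℝ} (hE : E ∈ skewZeroRowSum (Fin (m + 1))) :
    E = ∑ p, E p.1.1.succ p.1.2.succ • triangleBasis m p := by
  have hsum : ∑ p, E p.1.1.succ p.1.2.succ • triangleBasis m p ∈ skewZeroRowSum (Fin (m + 1)) :=
    Submodule.sum_mem _ fun p _ => Submodule.smul_mem _ _ (triangleBasis_mem_skewZeroRowSum m p)
  refine sub_eq_zero.1 (eq_zero_of_apply_succ_succ (sub_mem hE hsum) fun a b hab => ?_)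
  rw [Matrix.sub_apply, sum_smul_triangleBasis_apply _ hab, sub_self]

theorem span_range_triangleBasis (m : ℕ) :
    Submodule.span ℝ (Set.range (triangleBasis m)) = skewZeroRowSum (Fin (m + 1)) := by
  refine le_antisymm (Submodule.span_le.2 ?_) fun E hE => ?_
  · rintro _ ⟨p, rfl⟩
    exact triangleBasis_mem_skewZeroRowSum m p
  · rw [skewZeroRowSum.eq_sum_smul_triangleBasis hE]
    exact Submodule.sum_mem _ fun p _ => Submodule.smul_mem _ _ (Submodule.subset_span ⟨p, rfl⟩)

theorem span_trianglePatterns (n : ℕ) :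
    Submodule.span ℝ (trianglePatterns n) = skewZeroRowSum (Fin n) := by
  refine le_antisymm (span_trianglePatterns_le n) ?_
  cases n with
  | zero => exact fun E _ => Subsingleton.elim E 0 ▸ zero_mem _
  | succ m =>
    rw [← span_range_triangleBasis]
    exact Submodule.span_mono (Set.range_subset_iff.2 (triangleBasis_mem m))

theorem finrank_span_trianglePatterns (n : ℕ) :
    Module.finrank ℝ (Submodule.span ℝ (trianglePatterns n)) = (n - 1).choose 2 := by
  cases n with
  | zero => exact Module.finrank_zero_of_subsingleton
  | succ m =>
    rw [span_trianglePatterns, ← span_range_triangleBasis,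
      finrank_span_eq_card (linearIndependent_triangleBasis m), card_orderedPairs,
      Nat.add_sub_cancel]

theorem stmt_17_general (n : ℕ) :
    {E : Matrix (Fin n) (Fin n) ℝ |
        (∀ i, E i i = 0) ∧
          ∀ q : Fin n → Fin n → ℝ, IsWQMET q → (∑ i, ∑ j, E i j * q i j) = 0}
      = ↑(Submodule.span ℝ
          {M : Matrix (Fin n) (Fin n) ℝ |
            ∃ i j k : Fin n, i ≠ j ∧ j ≠ k ∧ i ≠ k ∧ M = Emat i j k}) ∧
    Module.finrank ℝ
        (Submodule.span ℝ
          {M : Matrix (Fin n) (Fin n) ℝ |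
            ∃ i j k : Fin n, i ≠ j ∧ j ≠ k ∧ i ≠ k ∧ M = Emat i j k})
      = (n - 1).choose 2 :=
  ⟨(annihilator_isWQMET_eq_skewZeroRowSum n).trans (congrArg _ (span_trianglePatterns n).symm),
    finrank_span_trianglePatterns n⟩

/-- the space of linear equalities valid on the cone `WQMET_n`
(zero-diagonal matrices `E` with `Σ E i j q i j = 0` for all `q ∈ WQMET_n`)
is spanned by the matrices `E_{ijk}` for pairwise distinct `i, j, k`, and has
dimension `(n−1 choose 2)`. -/
theorem stmt_17 (n : ℕ) (hn : 1 ≤ n) :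
    {E : Matrix (Fin n) (Fin n) ℝ |
        (∀ i, E i i = 0) ∧
          ∀ q : Fin n → Fin n → ℝ, IsWQMET q → (∑ i, ∑ j, E i j * q i j) = 0}
      = ↑(Submodule.span ℝ
          {M : Matrix (Fin n) (Fin n) ℝ |
            ∃ i j k : Fin n, i ≠ j ∧ j ≠ k ∧ i ≠ k ∧ M = Emat i j k}) ∧
    Module.finrank ℝ
        (Submodule.span ℝ
          {M : Matrix (Fin n) (Fin n) ℝ |
            ∃ i j k : Fin n, i ≠ j ∧ j ≠ k ∧ i ≠ k ∧ M = Emat i j k})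
      = (n - 1).choose 2 :=
  stmt_17_general n
end

section
/- Let n ≥ 1 and let q : Fin n → Fin n → ℝ. Then q lies in the convex cone generated by the oriented cuts δ'(S), S ⊆ Fin n (i.e., q is a finite nonnegative linear combination of oriented cuts) if and only if there exists a function d : Fin (n+1) → Fin (n+1) → ℝ lying in the convex cone generated by the cut semimetrics δ(T), T ⊆ Fin (n+1), such that q i j = (d (i+1) (j+1) − d 0 (i+1) + d 0 (j+1))/2 for all i, j ∈ Fin n. (That is, OCUT_n = Q(CUT_{n+1}).) -/
/-- Membership in the convex cone generated by a set `G` of functions: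
finite nonnegative linear combinations of elements of `G`. -/
def InCone {α : Type*} (G : Set (α → α → ℝ)) (f : α → α → ℝ) : Prop :=
  ∃ (m : ℕ) (c : Fin m → ℝ) (g : Fin m → α → α → ℝ),
    (∀ t, 0 ≤ c t) ∧ (∀ t, g t ∈ G) ∧ f = ∑ t, c t • g t

/-- The oriented cut `δ'(S)`: value 1 on pairs `(i,j)` with `i ∈ S`, `j ∉ S`. -/
def ocut {n : ℕ} (S : Finset (Fin n)) : Fin n → Fin n → ℝ :=
  fun i j => if i ∈ S ∧ j ∉ S then 1 else 0

/-- The cut semimetric `δ(T)`: value 1 on pairs split by `T`. -/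
def cutSM {m : ℕ} (T : Finset (Fin m)) : Fin m → Fin m → ℝ :=
  fun i j => if (i ∈ T ∧ j ∉ T) ∨ (j ∈ T ∧ i ∉ T) then 1 else 0

/-!
The map `Q d i j = (d (i+1) (j+1) - d 0 (i+1) + d 0 (j+1)) / 2` is linear, so it carries the cone
generated by a set onto the cone generated by the image of that set. It therefore suffices that `Q`
maps the cut semimetrics onto the oriented cuts: `Q (δ(T)) = δ'(S)` where `S` is the shore of
`δ(T)` containing `0`, shifted down by one, and every `S` arises from `T = ({0} ∪ (S + 1))ᶜ`.
-/

open Finset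

theorem InCone.image_iff {α β : Type*} (f : (α → α → ℝ) →ₗ[ℝ] (β → β → ℝ))
    (G : Set (α → α → ℝ)) (y : β → β → ℝ) :
    InCone (f '' G) y ↔ ∃ x, InCone G x ∧ f x = y := by
  constructor
  · rintro ⟨m, c, g, hc, hg, rfl⟩
    choose x hxG hx using hg
    exact ⟨∑ t, c t • x t, ⟨m, c, x, hc, hxG, rfl⟩, by simp [map_sum, hx]⟩
  · rintro ⟨x, ⟨m, c, g, hc, hg, rfl⟩, rfl⟩
    exact ⟨m, c, fun t => f (g t), hc, fun t => Set.mem_image_of_mem f (hg t), by simp [map_sum]⟩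

/-- The map `Q` of the paper, with apex `0`. -/
noncomputable def qTransform (n : ℕ) :
    (Fin (n + 1) → Fin (n + 1) → ℝ) →ₗ[ℝ] (Fin n → Fin n → ℝ) where
  toFun d i j := (d i.succ j.succ - d 0 i.succ + d 0 j.succ) / 2
  map_add' d e := by funext i j; simp only [Pi.add_apply]; ring
  map_smul' a d := by funext i j; simp only [Pi.smul_apply, smul_eq_mul, RingHom.id_apply]; ring

def shoreOfZero {n : ℕ} (T : Finset (Fin (n + 1))) : Finset (Fin n) :=
  univ.filter fun k => (k.succ ∈ T ↔ (0 : Fin (n + 1)) ∈ T)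

theorem qTransform_cutSM {n : ℕ} (T : Finset (Fin (n + 1))) :
    qTransform n (cutSM T) = ocut (shoreOfZero T) := by
  funext i j
  by_cases h0 : (0 : Fin (n + 1)) ∈ T <;> by_cases hi : i.succ ∈ T <;>
    by_cases hj : j.succ ∈ T <;> simp [qTransform, ocut, cutSM, shoreOfZero, h0, hi, hj]

theorem shoreOfZero_surjective (n : ℕ) : Function.Surjective (shoreOfZero (n := n)) := by
  intro S
  refine ⟨image Fin.succ Sᶜ, ?_⟩
  have h0 : (0 : Fin (n + 1)) ∉ image Fin.succ Sᶜ := by simp [Fin.succ_ne_zero]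
  ext k
  simp [shoreOfZero, h0, (Fin.succ_injective n).eq_iff]

theorem range_ocut_eq_image_cutSM (n : ℕ) :
    Set.range (ocut (n := n)) = qTransform n '' Set.range (cutSM (m := n + 1)) := by
  rw [← Set.range_comp, ← (shoreOfZero_surjective n).range_comp]
  exact congrArg Set.range (funext fun T => (qTransform_cutSM T).symm)

theorem stmt_18_general (n : ℕ) (q : Fin n → Fin n → ℝ) :
    InCone (Set.range (ocut (n := n))) q ↔
      ∃ d : Fin (n + 1) → Fin (n + 1) → ℝ,
        InCone (Set.range (cutSM (m := n + 1))) d ∧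
        ∀ i j : Fin n, q i j = (d i.succ j.succ - d 0 i.succ + d 0 j.succ) / 2 := by
  rw [range_ocut_eq_image_cutSM, InCone.image_iff]
  refine exists_congr fun d => and_congr_right fun _ => ?_
  simp only [funext_iff, eq_comm (a := q _ _)]
  rfl

/-- `OCUT_n = Q(CUT_{n+1})`: `q` is a nonnegative combination of
oriented cuts iff `q i j = (d (i+1) (j+1) − d 0 (i+1) + d 0 (j+1))/2` for some
`d` in the cut cone on `n+1` points. -/
theorem stmt_18 (n : ℕ) (hn : 1 ≤ n) (q : Fin n → Fin n → ℝ) :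
    InCone (Set.range (ocut (n := n))) q ↔
      ∃ d : Fin (n + 1) → Fin (n + 1) → ℝ,
        InCone (Set.range (cutSM (m := n + 1))) d ∧
        ∀ i j : Fin n, q i j = (d i.succ j.succ - d 0 i.succ + d 0 j.succ) / 2 :=
  stmt_18_general n q
end

section
/- Let n ≥ 1 and let q : Fin n → Fin n → ℝ. Then q lies in the convex cone generated by the oriented cuts δ'(S), S ⊆ Fin n, if and only if there exist m ∈ ℕ and points x : Fin n → (Fin m → ℝ) such that q i j = Σ_{k ∈ Fin m} max (x i k − x j k, 0) for all i, j ∈ Fin n. (That is, OCUT_n is exactly the set of ℓ₁-quasi-semimetrics on n points, the quasi-semimetrics embeddable into the oriented ℓ₁-norm ‖x − y‖_{1,or} = Σ_k max(x_k − y_k, 0).) -/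
/-!
An `ℓ₁`-quasi-semimetric is a sum over coordinates of oriented differences
`max (v i - v j) 0` of a single function `v`, so it suffices to put each of those in the cone.
Positive parts of differences add up along comonotone functions, and `v` splits comonotonically
into its truncation `min v b` below the second largest value `b` and the step
`max (v - b) 0 = (max v - b) • 1_{v > b}`, which produces a scaled oriented cut. Induction on the
set of values of `v` concludes. Conversely `c • δ'(S)` is the oriented difference of `c • 1_S`.
-/

open scoped NNReal

/-- `OCUT_n`, as a submodule over `ℝ≥0`. -/
abbrev ocutCone (n : ℕ) : Submodule ℝ≥0 (Fin n → Fin n → ℝ) :=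
  Submodule.span ℝ≥0 (Set.range (ocut (n := n)))

lemma inCone_iff_mem_span {α : Type*} (G : Set (α → α → ℝ)) (f : α → α → ℝ) :
    InCone G f ↔ f ∈ Submodule.span ℝ≥0 G := by
  rw [Submodule.mem_span_set']
  constructor
  · rintro ⟨m, c, g, hc, hg, rfl⟩
    exact ⟨m, fun t => ⟨c t, hc t⟩, fun t => ⟨g t, hg t⟩, rfl⟩
  · rintro ⟨m, c, g, rfl⟩
    exact ⟨m, fun t => c t, fun t => g t, fun t => (c t).2, fun t => (g t).2, rfl⟩

def orientedDiff {α : Type*} (v : α → ℝ) : α → α → ℝ :=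
  fun i j => max (v i - v j) 0

lemma orientedDiff_const {α : Type*} (a : ℝ) : orientedDiff (fun _ : α => a) = 0 := by
  ext i j
  simp [orientedDiff]

lemma orientedDiff_add_of_monovary {α : Type*} {f g : α → ℝ} (h : Monovary f g) :
    orientedDiff (f + g) = orientedDiff f + orientedDiff g := by
  ext i j
  simp only [orientedDiff, Pi.add_apply, max_def]
  rcases lt_trichotomy (g i) (g j) with hg | hg | hg
  · have := h hg
    split_ifs <;> linarith
  · split_ifs <;> linarith
  · have := h hg
    split_ifs <;> linarith

lemma orientedDiff_indicator {n : ℕ} (S : Finset (Fin n)) {c : ℝ} (hc : 0 ≤ c) :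
    orientedDiff (fun i => if i ∈ S then c else 0) = c • ocut S := by
  ext i j
  by_cases hi : i ∈ S <;> by_cases hj : j ∈ S <;> simp [orientedDiff, ocut, hi, hj, hc]

lemma orientedDiff_mem_ocutCone_of_forall_mem {n : ℕ} (T : Finset ℝ) :
    ∀ v : Fin n → ℝ, (∀ i, v i ∈ T) → orientedDiff v ∈ ocutCone n := by
  induction T using Finset.induction_on_max with
  | empty =>
    intro v hv
    convert zero_mem (ocutCone n)
    ext i
    exact absurd (hv i) (Finset.notMem_empty _)
  | insert a s hlt ih =>
    intro v hv
    rcases s.eq_empty_or_nonempty with rfl | hs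
    · have hconst : v = fun _ => a := funext fun i => by simpa using hv i
      simp [hconst, orientedDiff_const]
    set b := s.max' hs
    have hba : b < a := hlt b (s.max'_mem hs)
    have hv_le : ∀ i, v i ≠ a → v i ≤ b := fun i hi =>
      s.le_max' _ ((Finset.mem_insert.mp (hv i)).resolve_left hi)
    set S := Finset.univ.filter fun i => b < v i
    have hsplit : v = (fun i => min (v i) b) + fun i => if i ∈ S then a - b else 0 := by
      ext i
      by_cases hi : v i = a
      · simp [S, hi, hba, hba.le]
      · have := hv_le i hi
        simp [S, this, not_lt.mpr this]
    have hmono : Monovary (fun i => min (v i) b) fun i => if i ∈ S then a - b else 0 := by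
      intro i j hij
      have hj : b < v j := by
        by_contra h
        simp only [S, Finset.mem_filter, Finset.mem_univ, true_and, h, if_false] at hij
        split_ifs at hij <;> linarith
      exact (min_le_right _ _).trans (min_eq_right hj.le).ge
    have htrunc : ∀ i, min (v i) b ∈ s := fun i => by
      by_cases hi : v i = a
      · simpa [hi, hba.le] using s.max'_mem hs
      · rw [min_eq_left (hv_le i hi)]
        exact (Finset.mem_insert.mp (hv i)).resolve_left hi
    rw [hsplit, orientedDiff_add_of_monovary hmono, orientedDiff_indicator S (sub_nonneg.mpr hba.le)]
    refine add_mem (ih _ htrunc) ?_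
    rw [← NNReal.coe_mk (a - b) (sub_nonneg.mpr hba.le), ← NNReal.smul_def]
    exact Submodule.smul_mem _ _ (Submodule.subset_span ⟨S, rfl⟩)

lemma orientedDiff_mem_ocutCone {n : ℕ} (v : Fin n → ℝ) : orientedDiff v ∈ ocutCone n :=
  orientedDiff_mem_ocutCone_of_forall_mem (Finset.univ.image v) v fun i =>
    Finset.mem_image_of_mem v (Finset.mem_univ i)

theorem stmt_19_general (n : ℕ) (q : Fin n → Fin n → ℝ) :
    InCone (Set.range (ocut (n := n))) q ↔
      ∃ (m : ℕ) (x : Fin n → Fin m → ℝ),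
        ∀ i j, q i j = ∑ k, max (x i k - x j k) 0 := by
  constructor
  · rintro ⟨m, c, g, hc, hg, rfl⟩
    choose S hS using hg
    refine ⟨m, fun i t => if i ∈ S t then c t else 0, fun i j => ?_⟩
    simp only [Finset.sum_apply, ← hS, ← orientedDiff_indicator _ (hc _)]
    rfl
  · rintro ⟨m, x, hx⟩
    have hq : q = ∑ k, orientedDiff fun i => x i k := by
      ext i j
      simp [hx, orientedDiff, Finset.sum_apply]
    rw [inCone_iff_mem_span, hq]
    exact Submodule.sum_mem _ fun k _ => orientedDiff_mem_ocutCone _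

/-- `OCUT_n` is exactly the set of `ℓ₁`-quasi-semimetrics:
`q` is a nonnegative combination of oriented cuts iff it embeds into the
oriented `ℓ₁`-norm `‖x − y‖_{1,or} = Σ_k max(x_k − y_k, 0)`. -/
theorem stmt_19 (n : ℕ) (hn : 1 ≤ n) (q : Fin n → Fin n → ℝ) :
    InCone (Set.range (ocut (n := n))) q ↔
      ∃ (m : ℕ) (x : Fin n → Fin m → ℝ),
        ∀ i j, q i j = ∑ k, max (x i k - x j k) 0 :=
  stmt_19_general n q
end
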